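/- arXiv:1701.04155 — 5 statements merged into one kernel-verified Lean document; each statement's English description precedes it below -/
import Mathlib

section
/- Let Λ, Λ' ∈ ℂ^{n×n} be diagonal matrices of the form Λ = diag(Λ_r, 0) and Λ' = diag(Λ'_r, 0), where Λ_r, Λ'_r ∈ ℂ^{r×r} are invertible diagonal matrices. If P̃, Q̃ ∈ ℂ^{n×n} are invertible matrices satisfying P̃ Λ' Q̃† = Λ, then P̃ and Q̃ are block upper-triangular with respect to the decomposition n = r + (n−r): P̃ = [[P, Y₁],[0, P̄]] and Q̃ = [[Q, Y₂],[0, Q̄]] with P, Q ∈ ℂ^{r×r} invertible. -/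
open Matrix

noncomputable section

/-- if `Λ = diag(Λ_r, 0)` and `Λ' = diag(Λ'_r, 0)` with `Λ_r, Λ'_r`
invertible diagonal `r×r` blocks, and invertible `P̃, Q̃` satisfy
`P̃ Λ' Q̃† = Λ`, then `P̃` and `Q̃` are block upper-triangular with invertible
top-left `r×r` blocks. -/
theorem blockTriangular_of_conj_diag {r s : ℕ}
    (d d' : Fin r → ℂ) (hd : ∀ i, d i ≠ 0) (hd' : ∀ i, d' i ≠ 0)
    (Pt Qt : Matrix (Fin r ⊕ Fin s) (Fin r ⊕ Fin s) ℂ)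
    (hPt : IsUnit Pt.det) (hQt : IsUnit Qt.det)
    (h : Pt * Matrix.fromBlocks (Matrix.diagonal d') 0 0 0 * Qtᴴ =
        Matrix.fromBlocks (Matrix.diagonal d) 0 0 0) :
    Pt.toBlocks₂₁ = 0 ∧ IsUnit Pt.toBlocks₁₁.det ∧
    Qt.toBlocks₂₁ = 0 ∧ IsUnit Qt.toBlocks₁₁.det := by
  set A := Pt.toBlocks₁₁ with hA
  set C := Pt.toBlocks₂₁ with hC
  set X := Qt.toBlocks₁₁ with hX
  set Z := Qt.toBlocks₂₁ with hZ
  have hPt' : Pt = fromBlocks A Pt.toBlocks₁₂ C Pt.toBlocks₂₂ :=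
    (fromBlocks_toBlocks Pt).symm
  have hQt' : Qt = fromBlocks X Qt.toBlocks₁₂ Z Qt.toBlocks₂₂ :=
    (fromBlocks_toBlocks Qt).symm
  rw [hPt', hQt'] at h
  rw [fromBlocks_conjTranspose, fromBlocks_multiply, fromBlocks_multiply] at h
  simp only [Matrix.mul_zero, Matrix.zero_mul, add_zero, zero_add,
    Matrix.mul_assoc] at h
  have h11 : A * (Matrix.diagonal d' * Xᴴ) = Matrix.diagonal d :=
    congrArg Matrix.toBlocks₁₁ h
  have h12 : A * (Matrix.diagonal d' * Zᴴ) = 0 := congrArg Matrix.toBlocks₁₂ h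
  have h21 : C * (Matrix.diagonal d' * Xᴴ) = 0 := congrArg Matrix.toBlocks₂₁ h
  have hdetd' : IsUnit (Matrix.diagonal d').det := by
    rw [Matrix.det_diagonal]
    exact isUnit_iff_ne_zero.mpr (Finset.prod_ne_zero_iff.mpr fun i _ => hd' i)
  have hprod : IsUnit (A * (Matrix.diagonal d' * Xᴴ)).det := by
    rw [h11, Matrix.det_diagonal]
    exact isUnit_iff_ne_zero.mpr (Finset.prod_ne_zero_iff.mpr fun i _ => hd i)
  rw [Matrix.det_mul, Matrix.det_mul] at hprod
  have hdetA : IsUnit A.det := isUnit_of_mul_isUnit_left hprod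
  have hdetXH : IsUnit Xᴴ.det :=
    isUnit_of_mul_isUnit_right (isUnit_of_mul_isUnit_right hprod)
  have hdetX : IsUnit X.det := by
    have h' := hdetXH
    rw [Matrix.det_conjTranspose, isUnit_star] at h'
    exact h'
  refine ⟨?_, hdetA, ?_, ?_⟩
  · -- C = 0
    have hM : IsUnit (Matrix.diagonal d' * Xᴴ).det := by
      rw [Matrix.det_mul]; exact hdetd'.mul hdetXH
    have := congrArg (· * (Matrix.diagonal d' * Xᴴ)⁻¹) h21
    simpa [Matrix.mul_assoc, Matrix.mul_nonsing_inv _ hM] using this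
  · -- Z = 0
    have hM : IsUnit (A * Matrix.diagonal d').det := by
      rw [Matrix.det_mul]; exact hdetA.mul hdetd'
    rw [← Matrix.mul_assoc] at h12
    have := congrArg ((A * Matrix.diagonal d')⁻¹ * ·) h12
    simp only [← Matrix.mul_assoc, Matrix.nonsing_inv_mul _ hM, Matrix.one_mul,
      Matrix.mul_zero] at this
    have : Z = 0 := by
      have h0 : Zᴴᴴ = (0 : Matrix _ _ ℂ)ᴴ := congrArg conjTranspose this
      simpa using h0
    exact this
  · exact hdetX
end
end

section
/- Let Ψ, Ψ' ∈ ℂ^{m×n} with SVDs Ψ = U Λ V†, Ψ' = U' Λ' V'†, both of rank r. If there exist invertible A ∈ ℂ^{m×m}, B ∈ ℂ^{n×n} with Ψ' = A Ψ B^T, then there exist invertible matrices P̃, Q̃ ∈ GL(ℂ) of appropriate sizes, block upper-triangular with invertible r×r top-left blocks, such that U' = A U P̃, V' = B* V Q̃, and Λ' = P̃^{-1} Λ (Q̃†)^{-1}. -/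
open Matrix

noncomputable section

set_option maxHeartbeats 1600000 in
/-- if `Ψ = U Λ V†` and `Ψ' = U' Λ' V'†` are SVDs of rank `r`
(the `r` nonzero singular values sitting in the top-left diagonal block) and
`Ψ' = A Ψ Bᵀ` with `A`, `B` invertible, then there are invertible block
upper-triangular matrices `P̃`, `Q̃` with invertible `r×r` top-left blocks
such that `U' = A U P̃`, `V' = B* V Q̃` and `Λ' = P̃⁻¹ Λ (Q̃†)⁻¹`. -/
theorem svd_transfer {r s t : ℕ}
    (Ψ Ψ' : Matrix (Fin r ⊕ Fin s) (Fin r ⊕ Fin t) ℂ)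
    (U U' : Matrix (Fin r ⊕ Fin s) (Fin r ⊕ Fin s) ℂ)
    (V V' : Matrix (Fin r ⊕ Fin t) (Fin r ⊕ Fin t) ℂ)
    (d d' : Fin r → ℂ) (hd : ∀ i, d i ≠ 0) (hd' : ∀ i, d' i ≠ 0)
    (hU : U ∈ Matrix.unitaryGroup (Fin r ⊕ Fin s) ℂ)
    (hU' : U' ∈ Matrix.unitaryGroup (Fin r ⊕ Fin s) ℂ)
    (hV : V ∈ Matrix.unitaryGroup (Fin r ⊕ Fin t) ℂ)
    (hV' : V' ∈ Matrix.unitaryGroup (Fin r ⊕ Fin t) ℂ)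
    (hΨ : Ψ = U * (Matrix.fromBlocks (Matrix.diagonal d) 0 0 0 : Matrix (Fin r ⊕ Fin s) (Fin r ⊕ Fin t) ℂ) * Vᴴ)
    (hΨ' : Ψ' = U' * (Matrix.fromBlocks (Matrix.diagonal d') 0 0 0 : Matrix (Fin r ⊕ Fin s) (Fin r ⊕ Fin t) ℂ) * V'ᴴ)
    (A : Matrix (Fin r ⊕ Fin s) (Fin r ⊕ Fin s) ℂ)
    (B : Matrix (Fin r ⊕ Fin t) (Fin r ⊕ Fin t) ℂ)
    (hA : IsUnit A.det) (hB : IsUnit B.det)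
    (hAB : Ψ' = A * Ψ * Bᵀ) :
    ∃ (Pt : Matrix (Fin r ⊕ Fin s) (Fin r ⊕ Fin s) ℂ)
      (Qt : Matrix (Fin r ⊕ Fin t) (Fin r ⊕ Fin t) ℂ),
      IsUnit Pt.det ∧ IsUnit Qt.det ∧
      Pt.toBlocks₂₁ = 0 ∧ IsUnit Pt.toBlocks₁₁.det ∧
      Qt.toBlocks₂₁ = 0 ∧ IsUnit Qt.toBlocks₁₁.det ∧
      U' = A * U * Pt ∧
      V' = B.map (starRingEnd ℂ) * V * Qt ∧
      (Matrix.fromBlocks (Matrix.diagonal d') 0 0 0 : Matrix (Fin r ⊕ Fin s) (Fin r ⊕ Fin t) ℂ) =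
        Pt⁻¹ * (Matrix.fromBlocks (Matrix.diagonal d) 0 0 0 : Matrix (Fin r ⊕ Fin s) (Fin r ⊕ Fin t) ℂ) * (Qtᴴ)⁻¹ := by
  classical
  -- unitarity facts
  have hUl : Uᴴ * U = 1 := by
    simpa [Matrix.star_eq_conjTranspose] using (Unitary.mem_iff.mp hU).1
  have hUr : U * Uᴴ = 1 := by
    simpa [Matrix.star_eq_conjTranspose] using (Unitary.mem_iff.mp hU).2
  have hU'l : U'ᴴ * U' = 1 := by
    simpa [Matrix.star_eq_conjTranspose] using (Unitary.mem_iff.mp hU').1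
  have hU'r : U' * U'ᴴ = 1 := by
    simpa [Matrix.star_eq_conjTranspose] using (Unitary.mem_iff.mp hU').2
  have hVl : Vᴴ * V = 1 := by
    simpa [Matrix.star_eq_conjTranspose] using (Unitary.mem_iff.mp hV).1
  have hVr : V * Vᴴ = 1 := by
    simpa [Matrix.star_eq_conjTranspose] using (Unitary.mem_iff.mp hV).2
  have hV'l : V'ᴴ * V' = 1 := by
    simpa [Matrix.star_eq_conjTranspose] using (Unitary.mem_iff.mp hV').1
  have hV'r : V' * V'ᴴ = 1 := by
    simpa [Matrix.star_eq_conjTranspose] using (Unitary.mem_iff.mp hV').2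
  set Bc : Matrix (Fin r ⊕ Fin t) (Fin r ⊕ Fin t) ℂ := B.map (starRingEnd ℂ) with hBcdef
  have hBcdet : IsUnit Bc.det := by
    have h2 : (starRingEnd ℂ) B.det = Bc.det := RingHom.map_det (starRingEnd ℂ) B
    exact h2 ▸ hB.map (starRingEnd ℂ)
  have hBcH : Bcᴴ = Bᵀ := by
    ext i j
    simp [hBcdef, Matrix.conjTranspose_apply, Matrix.map_apply]
  have hBTdet : IsUnit Bᵀ.det := by rwa [Matrix.det_transpose]
  -- determinant facts
  have hUdet : IsUnit U.det := Matrix.isUnit_det_of_left_inverse hUl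
  have hUHdet : IsUnit Uᴴ.det := Matrix.isUnit_det_of_right_inverse hUl
  have hU'det : IsUnit U'.det := Matrix.isUnit_det_of_left_inverse hU'l
  have hVHdet : IsUnit Vᴴ.det := Matrix.isUnit_det_of_right_inverse hVl
  have hV'det : IsUnit V'.det := Matrix.isUnit_det_of_left_inverse hV'l
  have hAidet : IsUnit A⁻¹.det := Matrix.isUnit_nonsing_inv_det A hA
  have hBcidet : IsUnit Bc⁻¹.det := Matrix.isUnit_nonsing_inv_det Bc hBcdet
  -- cancellation helpers
  have cU : ∀ X : Matrix (Fin r ⊕ Fin s) (Fin r ⊕ Fin t) ℂ, U * (Uᴴ * X) = X := fun X => by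
    rw [← Matrix.mul_assoc, hUr, Matrix.one_mul]
  have cA : ∀ X : Matrix (Fin r ⊕ Fin s) (Fin r ⊕ Fin s) ℂ, A * (A⁻¹ * X) = X := fun X => by
    rw [← Matrix.mul_assoc, Matrix.mul_nonsing_inv A hA, Matrix.one_mul]
  have cAi : ∀ X : Matrix (Fin r ⊕ Fin s) (Fin r ⊕ Fin s) ℂ, A⁻¹ * (A * X) = X := fun X => by
    rw [← Matrix.mul_assoc, Matrix.nonsing_inv_mul A hA, Matrix.one_mul]
  have cU' : ∀ X : Matrix (Fin r ⊕ Fin s) (Fin r ⊕ Fin s) ℂ, U' * (U'ᴴ * X) = X := fun X => by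
    rw [← Matrix.mul_assoc, hU'r, Matrix.one_mul]
  have cU'H : ∀ X : Matrix (Fin r ⊕ Fin s) (Fin r ⊕ Fin t) ℂ, U'ᴴ * (U' * X) = X := fun X => by
    rw [← Matrix.mul_assoc, hU'l, Matrix.one_mul]
  have cV : ∀ X : Matrix (Fin r ⊕ Fin t) (Fin r ⊕ Fin t) ℂ, V * (Vᴴ * X) = X := fun X => by
    rw [← Matrix.mul_assoc, hVr, Matrix.one_mul]
  have cBc : ∀ X : Matrix (Fin r ⊕ Fin t) (Fin r ⊕ Fin t) ℂ, Bc * (Bc⁻¹ * X) = X := fun X => by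
    rw [← Matrix.mul_assoc, Matrix.mul_nonsing_inv Bc hBcdet, Matrix.one_mul]
  have cBT : ∀ X : Matrix (Fin r ⊕ Fin t) (Fin r ⊕ Fin t) ℂ, (Bᵀ)⁻¹ * (Bᵀ * X) = X := fun X => by
    rw [← Matrix.mul_assoc, Matrix.nonsing_inv_mul Bᵀ hBTdet, Matrix.one_mul]
  -- the candidate matrices
  set Pt : Matrix (Fin r ⊕ Fin s) (Fin r ⊕ Fin s) ℂ := Uᴴ * A⁻¹ * U' with hPtdef
  set Qt : Matrix (Fin r ⊕ Fin t) (Fin r ⊕ Fin t) ℂ := Vᴴ * Bc⁻¹ * V' with hQtdef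
  have hPtdet : IsUnit Pt.det := by
    rw [hPtdef, Matrix.det_mul, Matrix.det_mul]
    exact (hUHdet.mul hAidet).mul hU'det
  have hQtdet : IsUnit Qt.det := by
    rw [hQtdef, Matrix.det_mul, Matrix.det_mul]
    exact (hVHdet.mul hBcidet).mul hV'det
  have hQtHdet : IsUnit (Qtᴴ).det := by
    rw [Matrix.det_conjTranspose]
    exact isUnit_star.mpr hQtdet
  -- the two transfer equations
  have hU'eq : U' = A * U * Pt := by
    rw [hPtdef]
    simp only [Matrix.mul_assoc]
    rw [show U * (Uᴴ * (A⁻¹ * U')) = A⁻¹ * U' from by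
      rw [← Matrix.mul_assoc, hUr, Matrix.one_mul], cA]
  have hV'eq : V' = Bc * V * Qt := by
    rw [hQtdef]
    simp only [Matrix.mul_assoc]
    rw [cV, cBc]
  -- inverses
  have hPtinv : Pt⁻¹ = U'ᴴ * A * U := by
    apply Matrix.inv_eq_right_inv
    rw [hPtdef]
    simp only [Matrix.mul_assoc]
    rw [cU', cAi, hUl]
  have hQtH : Qtᴴ = V'ᴴ * ((Bᵀ)⁻¹ * V) := by
    rw [hQtdef]
    simp only [Matrix.conjTranspose_mul, Matrix.conjTranspose_nonsing_inv, hBcH,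
      Matrix.conjTranspose_conjTranspose, Matrix.mul_assoc]
  have hQtHinv : (Qtᴴ)⁻¹ = Vᴴ * Bᵀ * V' := by
    apply Matrix.inv_eq_right_inv
    rw [hQtH]
    simp only [Matrix.mul_assoc]
    rw [cV, cBT, hV'l]
  -- the singular-value transfer equation
  have eq2 : U' * (Matrix.fromBlocks (Matrix.diagonal d') 0 0 0 : Matrix (Fin r ⊕ Fin s) (Fin r ⊕ Fin t) ℂ) * V'ᴴ
      = A * (U * (Matrix.fromBlocks (Matrix.diagonal d) 0 0 0 : Matrix (Fin r ⊕ Fin s) (Fin r ⊕ Fin t) ℂ) * Vᴴ) * Bᵀ := by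
    rw [← hΨ, ← hΨ']; exact hAB
  have hLam : (Matrix.fromBlocks (Matrix.diagonal d') 0 0 0 : Matrix (Fin r ⊕ Fin s) (Fin r ⊕ Fin t) ℂ) =
      Pt⁻¹ * (Matrix.fromBlocks (Matrix.diagonal d) 0 0 0 : Matrix (Fin r ⊕ Fin s) (Fin r ⊕ Fin t) ℂ) * (Qtᴴ)⁻¹ := by
    rw [hPtinv, hQtHinv]
    have h3 : U'ᴴ * (U' * (Matrix.fromBlocks (Matrix.diagonal d') 0 0 0 : Matrix (Fin r ⊕ Fin s) (Fin r ⊕ Fin t) ℂ) * V'ᴴ) * V'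
        = U'ᴴ * A * U * (Matrix.fromBlocks (Matrix.diagonal d) 0 0 0 : Matrix (Fin r ⊕ Fin s) (Fin r ⊕ Fin t) ℂ) * (Vᴴ * Bᵀ * V') := by
      rw [eq2]; simp only [Matrix.mul_assoc]
    rw [← h3]
    simp only [Matrix.mul_assoc]
    rw [cU'H]
    rw [hV'l, Matrix.mul_one]
  -- block structure
  have hblock : Pt * (Matrix.fromBlocks (Matrix.diagonal d') 0 0 0 : Matrix (Fin r ⊕ Fin s) (Fin r ⊕ Fin t) ℂ) * Qtᴴ
      = (Matrix.fromBlocks (Matrix.diagonal d) 0 0 0 : Matrix (Fin r ⊕ Fin s) (Fin r ⊕ Fin t) ℂ) := by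
    rw [hLam]
    simp only [Matrix.mul_assoc]
    rw [Matrix.nonsing_inv_mul _ hQtHdet, Matrix.mul_one, ← Matrix.mul_assoc,
      Matrix.mul_nonsing_inv _ hPtdet, Matrix.one_mul]
  -- decompose into blocks
  have hPtb := (Matrix.fromBlocks_toBlocks Pt).symm
  have hRb := (Matrix.fromBlocks_toBlocks (Qtᴴ)).symm
  set P11 := Pt.toBlocks₁₁
  set P21 := Pt.toBlocks₂₁
  set R11 := (Qtᴴ).toBlocks₁₁
  set R12 := (Qtᴴ).toBlocks₁₂
  rw [hPtb, hRb] at hblock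
  simp only [Matrix.fromBlocks_multiply, Matrix.mul_zero, Matrix.zero_mul, add_zero, zero_add,
    Matrix.fromBlocks_inj] at hblock
  obtain ⟨e11, e12, e21, -⟩ := hblock
  have hDdet : IsUnit (Matrix.diagonal d).det := by
    rw [Matrix.det_diagonal]
    exact isUnit_iff_ne_zero.mpr (Finset.prod_ne_zero_iff.mpr fun i _ => hd i)
  have hD'det : IsUnit (Matrix.diagonal d').det := by
    rw [Matrix.det_diagonal]
    exact isUnit_iff_ne_zero.mpr (Finset.prod_ne_zero_iff.mpr fun i _ => hd' i)
  have e11det : IsUnit (P11.det * (Matrix.diagonal d').det * R11.det) := by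
    rw [← Matrix.det_mul, ← Matrix.det_mul, e11]; exact hDdet
  have hP11det : IsUnit P11.det :=
    isUnit_of_mul_isUnit_left (isUnit_of_mul_isUnit_left e11det)
  have hR11det : IsUnit R11.det := isUnit_of_mul_isUnit_right e11det
  have hP21 : P21 = 0 := by
    have hM : IsUnit (Matrix.diagonal d' * R11).det := by
      rw [Matrix.det_mul]; exact hD'det.mul hR11det
    calc P21 = P21 * ((Matrix.diagonal d' * R11) * (Matrix.diagonal d' * R11)⁻¹) := by
          rw [Matrix.mul_nonsing_inv _ hM, Matrix.mul_one]
      _ = (P21 * Matrix.diagonal d' * R11) * (Matrix.diagonal d' * R11)⁻¹ := by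
          simp only [Matrix.mul_assoc]
      _ = 0 := by rw [e21, Matrix.zero_mul]
  have hR12 : R12 = 0 := by
    have hM : IsUnit (P11 * Matrix.diagonal d').det := by
      rw [Matrix.det_mul]; exact hP11det.mul hD'det
    calc R12 = ((P11 * Matrix.diagonal d')⁻¹ * (P11 * Matrix.diagonal d')) * R12 := by
          rw [Matrix.nonsing_inv_mul _ hM, Matrix.one_mul]
      _ = (P11 * Matrix.diagonal d')⁻¹ * (P11 * Matrix.diagonal d' * R12) := by
          simp only [Matrix.mul_assoc]
      _ = 0 := by rw [e12, Matrix.mul_zero]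
  -- translate facts about Qtᴴ back to Qt
  have hR12def : R12 = (Qt.toBlocks₂₁)ᴴ := by
    ext i j
    simp [R12, Matrix.toBlocks₁₂, Matrix.toBlocks₂₁, Matrix.conjTranspose_apply]
  have hQt21 : Qt.toBlocks₂₁ = 0 := by
    have := hR12def ▸ hR12
    exact Matrix.conjTranspose_eq_zero.mp this
  have hR11def : R11 = (Qt.toBlocks₁₁)ᴴ := by
    ext i j
    simp [R11, Matrix.toBlocks₁₁, Matrix.conjTranspose_apply]
  have hQt11det : IsUnit Qt.toBlocks₁₁.det := by
    have : IsUnit ((Qt.toBlocks₁₁)ᴴ).det := hR11def ▸ hR11det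
    rw [Matrix.det_conjTranspose] at this
    exact isUnit_star.mp this
  exact ⟨Pt, Qt, hPtdet, hQtdet, hP21, hP11det, hQt21, hQt11det, hU'eq, by rw [hV'eq], hLam⟩
end
end

section
/- Conversely, let Ψ = U Λ V† and Ψ' = U' Λ' V'† be SVDs of two m×n complex matrices of rank r. Suppose there exist invertible A ∈ ℂ^{m×m}, B ∈ ℂ^{n×n} and invertible block upper-triangular matrices P̃, Q̃ (with respect to r) such that U' = A U P̃, V' = B* V Q̃, and P̃ Λ' Q̃† = Λ. Then Ψ' = A Ψ B^T. -/
open Matrix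

noncomputable section

/-- converse of the transfer theorem: if `Ψ = U Λ V†` and
`Ψ' = U' Λ' V'†` are SVDs of rank `r`, and there are invertible `A`, `B` and
invertible block upper-triangular `P̃`, `Q̃` with `U' = A U P̃`, `V' = B* V Q̃`
and `P̃ Λ' Q̃† = Λ`, then `Ψ' = A Ψ Bᵀ`. -/
theorem svd_transfer_converse {r s t : ℕ}
    (Ψ Ψ' : Matrix (Fin r ⊕ Fin s) (Fin r ⊕ Fin t) ℂ)
    (U U' : Matrix (Fin r ⊕ Fin s) (Fin r ⊕ Fin s) ℂ)
    (V V' : Matrix (Fin r ⊕ Fin t) (Fin r ⊕ Fin t) ℂ)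
    (d d' : Fin r → ℂ) (hd : ∀ i, d i ≠ 0) (hd' : ∀ i, d' i ≠ 0)
    (hU : U ∈ Matrix.unitaryGroup (Fin r ⊕ Fin s) ℂ)
    (hU' : U' ∈ Matrix.unitaryGroup (Fin r ⊕ Fin s) ℂ)
    (hV : V ∈ Matrix.unitaryGroup (Fin r ⊕ Fin t) ℂ)
    (hV' : V' ∈ Matrix.unitaryGroup (Fin r ⊕ Fin t) ℂ)
    (hΨ : Ψ = U * (Matrix.fromBlocks (Matrix.diagonal d) 0 0 0 :
        Matrix (Fin r ⊕ Fin s) (Fin r ⊕ Fin t) ℂ) * Vᴴ)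
    (hΨ' : Ψ' = U' * (Matrix.fromBlocks (Matrix.diagonal d') 0 0 0 :
        Matrix (Fin r ⊕ Fin s) (Fin r ⊕ Fin t) ℂ) * V'ᴴ)
    (A : Matrix (Fin r ⊕ Fin s) (Fin r ⊕ Fin s) ℂ)
    (B : Matrix (Fin r ⊕ Fin t) (Fin r ⊕ Fin t) ℂ)
    (hA : IsUnit A.det) (hB : IsUnit B.det)
    (Pt : Matrix (Fin r ⊕ Fin s) (Fin r ⊕ Fin s) ℂ)
    (Qt : Matrix (Fin r ⊕ Fin t) (Fin r ⊕ Fin t) ℂ)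
    (hPt : IsUnit Pt.det) (hQt : IsUnit Qt.det)
    (hPtri : Pt.toBlocks₂₁ = 0) (hQtri : Qt.toBlocks₂₁ = 0)
    (hUeq : U' = A * U * Pt)
    (hVeq : V' = B.map (starRingEnd ℂ) * V * Qt)
    (hΛeq : Pt * (Matrix.fromBlocks (Matrix.diagonal d') 0 0 0 :
        Matrix (Fin r ⊕ Fin s) (Fin r ⊕ Fin t) ℂ) * Qtᴴ =
        (Matrix.fromBlocks (Matrix.diagonal d) 0 0 0 :
        Matrix (Fin r ⊕ Fin s) (Fin r ⊕ Fin t) ℂ)) :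
    Ψ' = A * Ψ * Bᵀ := by
  have hB' : (B.map (starRingEnd ℂ))ᴴ = Bᵀ := by
    ext i j
    simp [conjTranspose_apply, Matrix.map_apply]
  calc Ψ' = A * U * (Pt * (Matrix.fromBlocks (Matrix.diagonal d') 0 0 0 :
        Matrix (Fin r ⊕ Fin s) (Fin r ⊕ Fin t) ℂ) * Qtᴴ) * Vᴴ * Bᵀ := by
        rw [hΨ', hUeq, hVeq, conjTranspose_mul, conjTranspose_mul, hB']
        simp only [Matrix.mul_assoc]
    _ = A * Ψ * Bᵀ := by rw [hΛeq, hΨ]; simp only [Matrix.mul_assoc]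
end
end

section
/- Let U, U' ∈ ℂ^{n×n} be invertible matrices with n = I₁·I₂. If there exists an invertible matrix P̃ ∈ ℂ^{n×n} such that Φ := U P̃ U'^{-1} satisfies rank(W(Φ a)) = rank(W(a)) for all vectors a ∈ ℂ^n, where W is the folding into I₁×I₂ matrices, then Φ = A₁ ⊗ A₂ for some invertible A₁ ∈ ℂ^{I₂×I₂}, A₂ ∈ ℂ^{I₁×I₁}, or (in case I₁ = I₂) Φ acts on folded matrices as X ↦ A₁ X^T A₂. -/
open Matrix

noncomputable section

/-- Column-major index pairing: `(i, j) ↦ i + m * j`. -/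
def vecIdx (m n : ℕ) : Fin m × Fin n ≃ Fin (m * n) :=
  (Equiv.prodComm (Fin m) (Fin n)).trans
    (finProdFinEquiv.trans (finCongr (Nat.mul_comm n m)))

/-- Column-major vectorization of a matrix. -/
def vec {m n : ℕ} (M : Matrix (Fin m) (Fin n) ℂ) : Fin (m * n) → ℂ :=
  fun k => M ((vecIdx m n).symm k).1 ((vecIdx m n).symm k).2

/-- The folding operation (inverse of column-major vectorization). -/
def fold {m n : ℕ} (a : Fin (m * n) → ℂ) : Matrix (Fin m) (Fin n) ℂ :=
  Matrix.of fun i j => a (vecIdx m n (i, j))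

/-- The Kronecker product `A₁ ⊗ A₂` (`A₁ : ℂ^{I₂×I₂}`, `A₂ : ℂ^{I₁×I₁}`) acting
on column-major vectorized `I₁×I₂` matrices: `(A₁ ⊗ A₂) vec X = vec (A₂ X A₁ᵀ)`. -/
def kron {I₁ I₂ : ℕ} (A₁ : Matrix (Fin I₂) (Fin I₂) ℂ) (A₂ : Matrix (Fin I₁) (Fin I₁) ℂ) :
    Matrix (Fin (I₁ * I₂)) (Fin (I₁ * I₂)) ℂ :=
  Matrix.of fun r s =>
    A₁ ((vecIdx I₁ I₂).symm r).2 ((vecIdx I₁ I₂).symm s).2 *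
      A₂ ((vecIdx I₁ I₂).symm r).1 ((vecIdx I₁ I₂).symm s).1

namespace RP

variable {m n : ℕ}

lemma mulVec_vecMulVec (u : Fin m → ℂ) (v w : Fin n → ℂ) :
    (vecMulVec u v).mulVec w = (v ⬝ᵥ w) • u := by
  funext i
  simp only [mulVec, dotProduct, vecMulVec_apply, Pi.smul_apply, smul_eq_mul, Finset.sum_mul]
  exact Finset.sum_congr rfl fun j _ => by ring

lemma vecMulVec_eq_zero_left (v : Fin n → ℂ) : vecMulVec (0 : Fin m → ℂ) v = 0 := by
  ext i j; simp [vecMulVec_apply]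

lemma vecMulVec_eq_zero_right (u : Fin m → ℂ) : vecMulVec u (0 : Fin n → ℂ) = 0 := by
  ext i j; simp [vecMulVec_apply]

lemma vecMulVec_ne_zero {u : Fin m → ℂ} {v : Fin n → ℂ} (hu : u ≠ 0) (hv : v ≠ 0) :
    vecMulVec u v ≠ 0 := by
  obtain ⟨i, hi'⟩ := Function.ne_iff.1 hu
  obtain ⟨j, hj'⟩ := Function.ne_iff.1 hv
  have hi : u i ≠ 0 := by simpa using hi'
  have hj : v j ≠ 0 := by simpa using hj'
  intro h
  have : vecMulVec u v i j = 0 := by rw [h]; rfl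
  rw [vecMulVec_apply] at this
  exact (mul_ne_zero hi hj) this

lemma rank_vecMulVec_le_one (u : Fin m → ℂ) (v : Fin n → ℂ) :
    (vecMulVec u v).rank ≤ 1 := by
  by_cases hu : u = 0
  · subst hu; rw [vecMulVec_eq_zero_left, rank_zero]; omega
  have hle : LinearMap.range (vecMulVec u v).mulVecLin ≤ Submodule.span ℂ {u} := by
    rintro x ⟨w, rfl⟩
    rw [mulVecLin_apply, mulVec_vecMulVec]
    exact Submodule.smul_mem _ _ (Submodule.mem_span_singleton_self u)
  calc (vecMulVec u v).rank ≤ Module.finrank ℂ (Submodule.span ℂ {u}) :=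
        Submodule.finrank_mono hle
    _ = 1 := finrank_span_singleton hu

lemma column_mem_range (M : Matrix (Fin m) (Fin n) ℂ) (j : Fin n) :
    (fun i => M i j) ∈ LinearMap.range M.mulVecLin := by
  refine ⟨Pi.single j 1, ?_⟩
  rw [mulVecLin_apply, mulVec_single]
  funext i; simp

lemma exists_vecMulVec_of_rank_le_one {M : Matrix (Fin m) (Fin n) ℂ} (h : M.rank ≤ 1) :
    ∃ u v, M = vecMulVec u v := by
  by_cases hM : M = 0
  · exact ⟨0, 0, by rw [hM, vecMulVec_eq_zero_left]⟩
  obtain ⟨i₀, j₀, hij⟩ : ∃ i j, M i j ≠ 0 := by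
    by_contra hc; push_neg at hc
    exact hM (by ext i j; simp [hc])
  set u : Fin m → ℂ := fun i => M i j₀ with hu_def
  have hu : u ≠ 0 := fun h0 => hij (by have := congrFun h0 i₀; simpa [hu_def] using this)
  have hspan_le : Submodule.span ℂ {u} ≤ LinearMap.range M.mulVecLin := by
    rw [Submodule.span_le, Set.singleton_subset_iff]
    exact column_mem_range M j₀
  have heq : Submodule.span ℂ {u} = LinearMap.range M.mulVecLin := by
    refine Submodule.eq_of_le_of_finrank_le hspan_le ?_
    rw [finrank_span_singleton hu]
    exact h
  have hcol : ∀ j, ∃ c : ℂ, (fun i => M i j) = c • u := by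
    intro j
    have := column_mem_range M j
    rw [← heq, Submodule.mem_span_singleton] at this
    obtain ⟨c, hc⟩ := this
    exact ⟨c, hc.symm⟩
  choose v hv using hcol
  refine ⟨u, v, ?_⟩
  ext i j
  have := congrFun (hv j) i
  simp only [Pi.smul_apply, smul_eq_mul] at this
  rw [vecMulVec_apply, this, mul_comm]

lemma exists_dual_pair {v₁ v₂ : Fin n → ℂ} (h : LinearIndependent ℂ ![v₁, v₂]) :
    ∃ w : Fin n → ℂ, v₁ ⬝ᵥ w = 1 ∧ v₂ ⬝ᵥ w = 0 := by
  set V : Matrix (Fin 2) (Fin n) ℂ := Matrix.of ![v₁, v₂] with hV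
  have hr : V.rank = 2 := by
    have := h.rank_matrix (R := ℂ)
    exact this.trans (by simp)
  have htop : LinearMap.range V.mulVecLin = ⊤ := by
    apply Submodule.eq_top_of_finrank_eq
    rw [← Matrix.rank, hr]
    simp [Module.finrank_pi]
  have : (![1, 0] : Fin 2 → ℂ) ∈ LinearMap.range V.mulVecLin := htop ▸ Submodule.mem_top
  obtain ⟨w, hw⟩ := this
  rw [mulVecLin_apply] at hw
  refine ⟨w, ?_, ?_⟩
  · have := congrFun hw 0
    simpa [mulVec, hV] using this
  · have := congrFun hw 1
    simpa [mulVec, hV] using this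

lemma pair_indep_swap {v₁ v₂ : Fin n → ℂ} (h : LinearIndependent ℂ ![v₁, v₂]) :
    LinearIndependent ℂ ![v₂, v₁] := by
  rw [LinearIndependent.pair_iff] at h ⊢
  intro s t hst
  have := h t s (by linear_combination (norm := module) hst)
  exact ⟨this.2, this.1⟩

lemma rank_sum_ge_two {u₁ u₂ : Fin m → ℂ} {v₁ v₂ : Fin n → ℂ}
    (hu : LinearIndependent ℂ ![u₁, u₂]) (hv : LinearIndependent ℂ ![v₁, v₂]) :
    ¬ (vecMulVec u₁ v₁ + vecMulVec u₂ v₂).rank ≤ 1 := by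
  intro hr
  set M := vecMulVec u₁ v₁ + vecMulVec u₂ v₂ with hM
  obtain ⟨w₁, hw₁, hw₁'⟩ := exists_dual_pair hv
  obtain ⟨w₂, hw₂, hw₂'⟩ := exists_dual_pair (pair_indep_swap hv)
  have h1 : u₁ ∈ LinearMap.range M.mulVecLin := by
    refine ⟨w₁, ?_⟩
    rw [mulVecLin_apply, hM, add_mulVec, mulVec_vecMulVec, mulVec_vecMulVec, hw₁, hw₁']
    simp
  have h2 : u₂ ∈ LinearMap.range M.mulVecLin := by
    refine ⟨w₂, ?_⟩
    rw [mulVecLin_apply, hM, add_mulVec, mulVec_vecMulVec, mulVec_vecMulVec, hw₂, hw₂']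
    simp
  have hle : Submodule.span ℂ (Set.range ![u₁, u₂]) ≤ LinearMap.range M.mulVecLin := by
    rw [Submodule.span_le]
    rintro x ⟨i, rfl⟩
    fin_cases i
    · exact h1
    · exact h2
  have : (2 : ℕ) ≤ M.rank := by
    have hf := finrank_span_eq_card hu
    simp only [Fintype.card_fin] at hf
    calc (2:ℕ) = Module.finrank ℂ (Submodule.span ℂ (Set.range ![u₁, u₂])) := hf.symm
      _ ≤ M.rank := Submodule.finrank_mono hle
  omega

lemma not_parallel_indep {u₁ u₂ : Fin m → ℂ} (hu₁ : u₁ ≠ 0) (hu₂ : u₂ ≠ 0)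
    (h : ¬ ∃ c : ℂ, u₂ = c • u₁) : LinearIndependent ℂ ![u₁, u₂] := by
  rw [LinearIndependent.pair_iff]
  intro st t hst
  by_cases ht : t = 0
  · subst ht
    simp only [zero_smul, add_zero, smul_eq_zero] at hst
    exact ⟨hst.resolve_right hu₁, rfl⟩
  · exfalso
    apply h
    refine ⟨-(t⁻¹ * st), ?_⟩
    have : t • u₂ = -(st • u₁) := by linear_combination (norm := module) hst
    have := congrArg (fun z => t⁻¹ • z) this
    simp only [smul_smul, inv_mul_cancel₀ ht, one_smul, smul_neg] at this
    rw [this]; module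

lemma rank_le_one_alternative {u₁ u₂ : Fin m → ℂ} {v₁ v₂ : Fin n → ℂ}
    (hu₁ : u₁ ≠ 0) (hu₂ : u₂ ≠ 0) (hv₁ : v₁ ≠ 0) (hv₂ : v₂ ≠ 0)
    (h : (vecMulVec u₁ v₁ + vecMulVec u₂ v₂).rank ≤ 1) :
    (∃ c : ℂ, u₂ = c • u₁) ∨ (∃ c : ℂ, v₂ = c • v₁) := by
  by_contra hc
  rw [not_or] at hc
  exact rank_sum_ge_two (not_parallel_indep hu₁ hu₂ hc.1) (not_parallel_indep hv₁ hv₂ hc.2) h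

lemma decomp_unique {u u' : Fin m → ℂ} {v v' : Fin n → ℂ}
    (h : vecMulVec u v = vecMulVec u' v') (hu : u ≠ 0) (hv : v ≠ 0) :
    ∃ c : ℂ, c ≠ 0 ∧ u' = c • u ∧ v = c • v' := by
  obtain ⟨i₀, hi₀'⟩ := Function.ne_iff.1 hu
  obtain ⟨j₀, hj₀'⟩ := Function.ne_iff.1 hv
  have hi₀ : u i₀ ≠ 0 := by simpa using hi₀'
  have hj₀ : v j₀ ≠ 0 := by simpa using hj₀'
  have key : ∀ i j, u i * v j = u' i * v' j := fun i j => by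
    have := congrFun (congrFun h i) j
    simpa [vecMulVec_apply] using this
  have h00 : u i₀ * v j₀ = u' i₀ * v' j₀ := key i₀ j₀
  have hne : u' i₀ * v' j₀ ≠ 0 := h00 ▸ mul_ne_zero hi₀ hj₀
  have hu' : u' i₀ ≠ 0 := fun h0 => hne (by rw [h0, zero_mul])
  have hv' : v' j₀ ≠ 0 := fun h0 => hne (by rw [h0, mul_zero])
  have hc' : (v j₀ / v' j₀) * v' j₀ = v j₀ := div_mul_cancel₀ _ hv'
  refine ⟨v j₀ / v' j₀, div_ne_zero hj₀ hv', ?_, ?_⟩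
  · funext i
    have e := key i j₀
    rw [Pi.smul_apply, smul_eq_mul]
    apply mul_right_cancel₀ hv'
    rw [mul_right_comm, hc']
    linear_combination -e
  · funext j
    have e₁ := key i₀ j
    have e₂ := key i₀ j₀
    rw [Pi.smul_apply, smul_eq_mul]
    apply mul_left_cancel₀ hi₀
    apply mul_right_cancel₀ hv'
    field_simp
    apply mul_left_cancel₀ hi₀
    linear_combination v' j₀ * e₁ - v' j * e₂








variable {m n p : ℕ}

lemma smul_vecMulVec_left (c : ℂ) (u : Fin m → ℂ) (v : Fin n → ℂ) :
    vecMulVec (c • u) v = c • vecMulVec u v := by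
  ext i j; simp [vecMulVec_apply]; ring

lemma smul_vecMulVec_right (c : ℂ) (u : Fin m → ℂ) (v : Fin n → ℂ) :
    vecMulVec u (c • v) = c • vecMulVec u v := by
  ext i j; simp [vecMulVec_apply]; ring

lemma vecMulVec_smul_comm (c : ℂ) (u : Fin m → ℂ) (v : Fin n → ℂ) :
    vecMulVec (c • u) v = vecMulVec u (c • v) := by
  rw [smul_vecMulVec_left, smul_vecMulVec_right]

lemma transpose_vecMulVec (u : Fin m → ℂ) (v : Fin n → ℂ) :
    (vecMulVec u v)ᵀ = vecMulVec v u := by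
  ext i j; simp [vecMulVec_apply, transpose_apply, mul_comm]

lemma single_ne_zero' (k : Fin p) : (Pi.single k 1 : Fin p → ℂ) ≠ 0 := by
  intro h
  have := congrFun h k
  simp at this

lemma single_not_parallel {k k' : Fin p} (h : k ≠ k') (c : ℂ) :
    (Pi.single k' 1 : Fin p → ℂ) ≠ c • (Pi.single k 1 : Fin p → ℂ) := by
  intro hc
  have := congrFun hc k'
  simp [Pi.single_apply, h, (Ne.symm h)] at this

/-- Nonzero decomposition of a nonzero rank ≤ 1 matrix. -/
lemma exists_nonzero_decomp {M : Matrix (Fin m) (Fin n) ℂ} (h : M.rank ≤ 1) (hM : M ≠ 0) :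
    ∃ u v, u ≠ 0 ∧ v ≠ 0 ∧ M = vecMulVec u v := by
  obtain ⟨u, v, rfl⟩ := exists_vecMulVec_of_rank_le_one h
  refine ⟨u, v, ?_, ?_, rfl⟩
  · intro h0; exact hM (by rw [h0, vecMulVec_eq_zero_left])
  · intro h0; exact hM (by rw [h0, vecMulVec_eq_zero_right])

lemma classify_aux (T : (Fin p → ℂ) →ₗ[ℂ] Matrix (Fin m) (Fin n) ℂ)
    (hinj : Function.Injective T) (hr : ∀ y, (T y).rank ≤ 1)
    (x₀ x₁ : Fin p → ℂ) (hx : ∀ c : ℂ, x₁ ≠ c • x₀)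
    {u₁ v₁ u₂ v₂ : _} (h₁ : T x₀ = vecMulVec u₁ v₁) (h₂ : T x₁ = vecMulVec u₂ v₂)
    (hu₁ : u₁ ≠ 0) (hv₁ : v₁ ≠ 0) (hu₂ : u₂ ≠ 0) (hv₂ : v₂ ≠ 0)
    (hpar : ∃ c : ℂ, u₂ = c • u₁) :
    ∀ y, ∃ v, T y = vecMulVec u₁ v := by
  obtain ⟨c, hc⟩ := hpar
  have hcne : c ≠ 0 := by rintro rfl; rw [zero_smul] at hc; exact hu₂ hc
  have h₂' : T x₁ = vecMulVec u₁ (c • v₂) := by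
    rw [h₂, hc, vecMulVec_smul_comm]
  set v₂' := c • v₂ with hv₂'def
  have hv₂' : v₂' ≠ 0 := smul_ne_zero hcne hv₂
  have hv12 : ∀ d : ℂ, v₂' ≠ d • v₁ := by
    intro d hd
    have : T x₁ = T (d • x₀) := by
      rw [T.map_smul, h₁, h₂', hd, smul_vecMulVec_right]
    exact hx d (hinj this)
  intro y
  by_cases hy0 : T y = 0
  · exact ⟨0, by rw [hy0, vecMulVec_eq_zero_right]⟩
  obtain ⟨u₃, v₃, hu₃, hv₃, h₃⟩ := exists_nonzero_decomp (hr y) hy0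
  have halt1 : (∃ d : ℂ, u₁ = d • u₃) ∨ (∃ d : ℂ, v₁ = d • v₃) := by
    have := hr (y + x₀)
    rw [map_add, h₃, h₁] at this
    exact rank_le_one_alternative hu₃ hu₁ hv₃ hv₁ this
  have key : (∃ d : ℂ, u₁ = d • u₃) → ∃ v, T y = vecMulVec u₁ v := by
    rintro ⟨d, hd⟩
    have hdne : d ≠ 0 := by rintro rfl; rw [zero_smul] at hd; exact hu₁ hd
    have : u₃ = d⁻¹ • u₁ := by rw [hd, smul_smul, inv_mul_cancel₀ hdne, one_smul]
    exact ⟨d⁻¹ • v₃, by rw [h₃, this, vecMulVec_smul_comm]⟩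
  rcases halt1 with h | ⟨d, hd⟩
  · exact key h
  have hdne : d ≠ 0 := by rintro rfl; rw [zero_smul] at hd; exact hv₁ hd
  have halt2 : (∃ d : ℂ, u₁ = d • u₃) ∨ (∃ e : ℂ, v₂' = e • v₃) := by
    have := hr (y + x₁)
    rw [map_add, h₃, h₂'] at this
    exact rank_le_one_alternative hu₃ hu₁ hv₃ hv₂' this
  rcases halt2 with h | ⟨e, he⟩
  · exact key h
  exfalso
  have hv₃' : v₃ = d⁻¹ • v₁ := by rw [hd, smul_smul, inv_mul_cancel₀ hdne, one_smul]
  exact hv12 (e * d⁻¹) (by rw [he, hv₃', smul_smul])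

lemma classify (hp : 2 ≤ p) (T : (Fin p → ℂ) →ₗ[ℂ] Matrix (Fin m) (Fin n) ℂ)
    (hinj : Function.Injective T) (hr : ∀ y, (T y).rank ≤ 1) :
    (∃ u, u ≠ 0 ∧ ∀ y, ∃ v, T y = vecMulVec u v) ∨
    (∃ v, v ≠ 0 ∧ ∀ y, ∃ u, T y = vecMulVec u v) := by
  have h01 : (⟨0, by omega⟩ : Fin p) ≠ ⟨1, by omega⟩ := by
    intro h; simpa using congrArg Fin.val h
  set x₀ : Fin p → ℂ := Pi.single ⟨0, by omega⟩ 1 with hx₀def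
  set x₁ : Fin p → ℂ := Pi.single ⟨1, by omega⟩ 1 with hx₁def
  have hx : ∀ c : ℂ, x₁ ≠ c • x₀ := single_not_parallel h01
  have hTx₀ : T x₀ ≠ 0 := by
    intro h
    exact single_ne_zero' _ (hinj (by rw [h, map_zero]))
  have hTx₁ : T x₁ ≠ 0 := by
    intro h
    exact single_ne_zero' _ (hinj (by rw [h, map_zero]))
  obtain ⟨u₁, v₁, hu₁, hv₁, h₁⟩ := exists_nonzero_decomp (hr x₀) hTx₀
  obtain ⟨u₂, v₂, hu₂, hv₂, h₂⟩ := exists_nonzero_decomp (hr x₁) hTx₁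
  have halt : (∃ c : ℂ, u₂ = c • u₁) ∨ (∃ c : ℂ, v₂ = c • v₁) := by
    have := hr (x₀ + x₁)
    rw [map_add, h₁, h₂] at this
    exact rank_le_one_alternative hu₁ hu₂ hv₁ hv₂ this
  rcases halt with h | h
  · left
    exact ⟨u₁, hu₁, classify_aux T hinj hr x₀ x₁ hx h₁ h₂ hu₁ hv₁ hu₂ hv₂ h⟩
  · right
    set T' : (Fin p → ℂ) →ₗ[ℂ] Matrix (Fin n) (Fin m) ℂ :=
      (Matrix.transposeLinearEquiv (Fin m) (Fin n) ℂ ℂ).toLinearMap.comp T with hT'def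
    have hT'app : ∀ y, T' y = (T y)ᵀ := fun y => rfl
    have hinj' : Function.Injective T' :=
      (Matrix.transposeLinearEquiv (Fin m) (Fin n) ℂ ℂ).injective.comp hinj
    have hr' : ∀ y, (T' y).rank ≤ 1 := by
      intro y; rw [hT'app, rank_transpose]; exact hr y
    have h₁' : T' x₀ = vecMulVec v₁ u₁ := by rw [hT'app, h₁, transpose_vecMulVec]
    have h₂' : T' x₁ = vecMulVec v₂ u₂ := by rw [hT'app, h₂, transpose_vecMulVec]
    refine ⟨v₁, hv₁, ?_⟩
    have := classify_aux T' hinj' hr' x₀ x₁ hx h₁' h₂' hv₁ hu₁ hv₂ hu₂ h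
    intro y
    obtain ⟨u, hu⟩ := this y
    refine ⟨u, ?_⟩
    have hTy : T y = (T' y)ᵀ := by rw [hT'app, transpose_transpose]
    rw [hTy, hu, transpose_vecMulVec]


lemma vecMulVec_add_left (u u' : Fin m → ℂ) (v : Fin n → ℂ) :
    vecMulVec (u + u') v = vecMulVec u v + vecMulVec u' v := by
  ext i j; simp [vecMulVec_apply]; ring

lemma vecMulVec_add_right (u : Fin m → ℂ) (v v' : Fin n → ℂ) :
    vecMulVec u (v + v') = vecMulVec u v + vecMulVec u v' := by
  ext i j; simp [vecMulVec_apply]; ring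

lemma vecMulVec_sub_left (u u' : Fin m → ℂ) (v : Fin n → ℂ) :
    vecMulVec (u - u') v = vecMulVec u v - vecMulVec u' v := by
  ext i j; simp [vecMulVec_apply]; ring

lemma vecMulVec_sub_right (u : Fin m → ℂ) (v v' : Fin n → ℂ) :
    vecMulVec u (v - v') = vecMulVec u v - vecMulVec u v' := by
  ext i j; simp [vecMulVec_apply]; ring

lemma eq_zero_of_vecMulVec_left {u : Fin m → ℂ} {v : Fin n → ℂ}
    (h : vecMulVec u v = 0) (hv : v ≠ 0) : u = 0 := by
  by_contra hu
  exact vecMulVec_ne_zero hu hv h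

lemma eq_zero_of_vecMulVec_right {u : Fin m → ℂ} {v : Fin n → ℂ}
    (h : vecMulVec u v = 0) (hu : u ≠ 0) : v = 0 := by
  by_contra hv
  exact vecMulVec_ne_zero hu hv h

lemma not_parallel_symm {x z : Fin p → ℂ} (hx : x ≠ 0)
    (h : ∀ c : ℂ, z ≠ c • x) : ∀ c : ℂ, x ≠ c • z := by
  intro c hc
  have hcne : c ≠ 0 := by rintro rfl; rw [zero_smul] at hc; exact hx hc
  exact h c⁻¹ (by rw [hc, smul_smul, inv_mul_cancel₀ hcne, one_smul])

lemma exists_not_parallel_pair (hp : 2 ≤ p) {x x' : Fin p → ℂ} (hx : x ≠ 0) (hx' : x' ≠ 0) :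
    ∃ z : Fin p → ℂ, z ≠ 0 ∧ (∀ c : ℂ, z ≠ c • x) ∧ (∀ c : ℂ, z ≠ c • x') := by
  by_cases hxx : ∃ c : ℂ, x' = c • x
  · obtain ⟨c₀, hc₀⟩ := hxx
    obtain ⟨w, hw⟩ : ∃ w, w ∉ Submodule.span ℂ {x} := by
      by_contra hcon
      push_neg at hcon
      have htop : Submodule.span ℂ {x} = ⊤ := Submodule.eq_top_iff'.2 hcon
      have h1 := finrank_span_singleton (K := ℂ) hx
      have h2 : Module.finrank ℂ ↥(Submodule.span ℂ {x}) = Module.finrank ℂ (Fin p → ℂ) := by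
        rw [htop]
        exact finrank_top ℂ (Fin p → ℂ)
      have h3 : Module.finrank ℂ (Fin p → ℂ) = p := by simp
      omega
    refine ⟨w, ?_, ?_, ?_⟩
    · rintro rfl; exact hw (Submodule.zero_mem _)
    · rintro c rfl
      exact hw (Submodule.smul_mem _ _ (Submodule.mem_span_singleton_self x))
    · rintro c rfl
      rw [hc₀, smul_smul] at hw
      exact hw (Submodule.smul_mem _ _ (Submodule.mem_span_singleton_self x))
  · refine ⟨x + x', ?_, ?_, ?_⟩
    · intro h
      apply hxx
      refine ⟨-1, ?_⟩
      have h1 : x' = -x := by linear_combination (norm := module) h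
      rw [h1]; module
    · intro c h
      exact hxx ⟨c - 1, by linear_combination (norm := module) h⟩
    · intro c h
      have hx0 : x = (c - 1) • x' := by linear_combination (norm := module) h
      have hc1 : c - 1 ≠ 0 := by
        rintro h0
        rw [h0, zero_smul] at hx0
        exact hx hx0
      exact hxx ⟨(c-1)⁻¹, by rw [hx0, smul_smul, inv_mul_cancel₀ hc1, one_smul]⟩

lemma core {p q r s : ℕ} (hp : 2 ≤ p) (hq : 2 ≤ q)
    (F : (Fin p → ℂ) →ₗ[ℂ] (Fin q → ℂ) →ₗ[ℂ] Matrix (Fin r) (Fin s) ℂ)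
    (hnz : ∀ x, x ≠ 0 → ∀ y, y ≠ 0 → F x y ≠ 0)
    (hcol : ∀ x, x ≠ 0 → ∃ u, u ≠ 0 ∧ ∀ y, ∃ v, F x y = vecMulVec u v)
    (hrow : ∀ y, y ≠ 0 → ∃ v, v ≠ 0 ∧ ∀ x, ∃ u, F x y = vecMulVec u v) :
    ∃ (a : (Fin p → ℂ) →ₗ[ℂ] (Fin r → ℂ)) (b : (Fin q → ℂ) →ₗ[ℂ] (Fin s → ℂ)),
      (∀ x, x ≠ 0 → a x ≠ 0) ∧ (∀ y, y ≠ 0 → b y ≠ 0) ∧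
      ∀ x y, F x y = vecMulVec (a x) (b y) := by
  classical
  set x₀ : Fin p → ℂ := Pi.single ⟨0, by omega⟩ 1 with hx₀def
  set y₀ : Fin q → ℂ := Pi.single ⟨0, by omega⟩ 1 with hy₀def
  have hx₀ : x₀ ≠ 0 := single_ne_zero' _
  have hy₀ : y₀ ≠ 0 := single_ne_zero' _
  obtain ⟨v₀, hv₀, hv₀all⟩ := hrow y₀ hy₀
  obtain ⟨j₀, hj₀'⟩ := Function.ne_iff.1 hv₀
  have hj₀ : v₀ j₀ ≠ 0 := by simpa using hj₀'
  obtain ⟨u₀, hu₀, hu₀all⟩ := hcol x₀ hx₀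
  obtain ⟨i₀, hi₀'⟩ := Function.ne_iff.1 hu₀
  have hi₀ : u₀ i₀ ≠ 0 := by simpa using hi₀'
  set a : (Fin p → ℂ) →ₗ[ℂ] (Fin r → ℂ) :=
    { toFun := fun x i => F x y₀ i j₀
      map_add' := by intro x x'; funext i; simp [_root_.map_add]
      map_smul' := by intro c x; funext i; simp [_root_.map_smul] } with hadef
  set b : (Fin q → ℂ) →ₗ[ℂ] (Fin s → ℂ) :=
    { toFun := fun y j => F x₀ y i₀ j
      map_add' := by intro y y'; funext j; simp [_root_.map_add]
      map_smul' := by intro c y; funext j; simp [_root_.map_smul] } with hbdef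
  have ha : ∀ x, x ≠ 0 → a x ≠ 0 := by
    intro x hx
    obtain ⟨u, hu⟩ := hv₀all x
    have hu0 : u ≠ 0 := by
      intro h0; exact hnz x hx y₀ hy₀ (by rw [hu, h0, vecMulVec_eq_zero_left])
    have heq : a x = v₀ j₀ • u := by
      funext i
      show F x y₀ i j₀ = _
      rw [hu, vecMulVec_apply]
      simp [mul_comm]
    rw [heq]
    exact smul_ne_zero hj₀ hu0
  have hb : ∀ y, y ≠ 0 → b y ≠ 0 := by
    intro y hy
    obtain ⟨v, hv⟩ := hu₀all y
    have hv0 : v ≠ 0 := by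
      intro h0; exact hnz x₀ hx₀ y hy (by rw [hv, h0, vecMulVec_eq_zero_right])
    have heq : b y = u₀ i₀ • v := by
      funext j
      show F x₀ y i₀ j = _
      rw [hv, vecMulVec_apply]
      simp
    rw [heq]
    exact smul_ne_zero hi₀ hv0
  have hpoint : ∀ x, x ≠ 0 → ∀ y, y ≠ 0 → ∃ c : ℂ, F x y = c • vecMulVec (a x) (b y) := by
    intro x hx y hy
    obtain ⟨ux, hux0, huxall⟩ := hcol x hx
    obtain ⟨vy, hvy0, hvyall⟩ := hrow y hy
    obtain ⟨v', hv'⟩ := huxall y₀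
    have haxeq : a x = v' j₀ • ux := by
      funext i
      show F x y₀ i j₀ = _
      rw [hv', vecMulVec_apply]
      simp [mul_comm]
    have hv'j₀ : v' j₀ ≠ 0 := by
      intro h0
      exact ha x hx (by rw [haxeq, h0, zero_smul])
    obtain ⟨u', hu'⟩ := hvyall x₀
    have hbyeq : b y = u' i₀ • vy := by
      funext j
      show F x₀ y i₀ j = _
      rw [hu', vecMulVec_apply]
      simp
    have hu'i₀ : u' i₀ ≠ 0 := by
      intro h0
      exact hb y hy (by rw [hbyeq, h0, zero_smul])
    obtain ⟨v'', hv''⟩ := huxall y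
    obtain ⟨u'', hu''⟩ := hvyall x
    have hne : F x y ≠ 0 := hnz x hx y hy
    have hv''0 : v'' ≠ 0 := by
      intro h0; exact hne (by rw [hv'', h0, vecMulVec_eq_zero_right])
    have hee : vecMulVec ux v'' = vecMulVec u'' vy := by rw [← hv'', ← hu'']
    obtain ⟨c, hc0, hcu, hcv⟩ := decomp_unique hee hux0 hv''0
    refine ⟨c * (v' j₀)⁻¹ * (u' i₀)⁻¹, ?_⟩
    rw [hv'', hcv, haxeq, hbyeq]
    ext i j
    simp only [vecMulVec_apply, Matrix.smul_apply, Pi.smul_apply, smul_eq_mul]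
    field_simp
  have hH : ∀ x x' y, x ≠ 0 → x' ≠ 0 → y ≠ 0 → (∀ e : ℂ, x' ≠ e • x) →
      ∀ c c' : ℂ, F x y = c • vecMulVec (a x) (b y) →
        F x' y = c' • vecMulVec (a x') (b y) → c = c' := by
    intro x x' y hx hx' hy hnp c c' h1 h2
    have hxx' : x + x' ≠ 0 := by
      intro h0
      refine hnp (-1) ?_
      have h3 : x' = -x := by linear_combination (norm := module) h0
      rw [h3]; module
    obtain ⟨c'', h3⟩ := hpoint (x + x') hxx' y hy
    have hFadd : F (x + x') y = F x y + F x' y := by rw [map_add]; rfl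
    have haadd : a (x + x') = a x + a x' := map_add a x x'
    rw [hFadd, h1, h2, haadd] at h3
    have h4 : vecMulVec (c • a x + c' • a x' - c'' • (a x + a x')) (b y) = 0 := by
      rw [← smul_vecMulVec_left, ← smul_vecMulVec_left, ← smul_vecMulVec_left,
        ← vecMulVec_add_left] at h3
      rw [vecMulVec_sub_left, h3, sub_self]
    have h5 : c • a x + c' • a x' - c'' • (a x + a x') = 0 :=
      eq_zero_of_vecMulVec_left h4 (hb y hy)
    have h6 : a ((c - c'') • x + (c' - c'') • x') = 0 := by
      rw [_root_.map_add, _root_.map_smul, _root_.map_smul]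
      linear_combination (norm := module) h5
    have h7 : (c - c'') • x + (c' - c'') • x' = 0 := by
      by_contra h0
      exact ha _ h0 h6
    have hind := not_parallel_indep hx hx' (by rintro ⟨e, he⟩; exact hnp e he)
    obtain ⟨h8, h9⟩ := LinearIndependent.pair_iff.1 hind _ _ h7
    rw [sub_eq_zero] at h8 h9
    rw [h8, h9]
  have hH' : ∀ x y y', x ≠ 0 → y ≠ 0 → y' ≠ 0 → (∀ e : ℂ, y' ≠ e • y) →
      ∀ c c' : ℂ, F x y = c • vecMulVec (a x) (b y) →
        F x y' = c' • vecMulVec (a x) (b y') → c = c' := by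
    intro x y y' hx hy hy' hnp c c' h1 h2
    have hyy' : y + y' ≠ 0 := by
      intro h0
      refine hnp (-1) ?_
      have h3 : y' = -y := by linear_combination (norm := module) h0
      rw [h3]; module
    obtain ⟨c'', h3⟩ := hpoint x hx (y + y') hyy'
    have hFadd : F x (y + y') = F x y + F x y' := map_add (F x) y y'
    have hbadd : b (y + y') = b y + b y' := map_add b y y'
    rw [hFadd, h1, h2, hbadd] at h3
    have h4 : vecMulVec (a x) (c • b y + c' • b y' - c'' • (b y + b y')) = 0 := by
      rw [← smul_vecMulVec_right, ← smul_vecMulVec_right, ← smul_vecMulVec_right,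
        ← vecMulVec_add_right] at h3
      rw [vecMulVec_sub_right, h3, sub_self]
    have h5 : c • b y + c' • b y' - c'' • (b y + b y') = 0 :=
      eq_zero_of_vecMulVec_right h4 (ha x hx)
    have h6 : b ((c - c'') • y + (c' - c'') • y') = 0 := by
      rw [_root_.map_add, _root_.map_smul, _root_.map_smul]
      linear_combination (norm := module) h5
    have h7 : (c - c'') • y + (c' - c'') • y' = 0 := by
      by_contra h0
      exact hb _ h0 h6
    have hind := not_parallel_indep hy hy' (by rintro ⟨e, he⟩; exact hnp e he)
    obtain ⟨h8, h9⟩ := LinearIndependent.pair_iff.1 hind _ _ h7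
    rw [sub_eq_zero] at h8 h9
    rw [h8, h9]
  obtain ⟨γ, hγ⟩ := hpoint x₀ hx₀ y₀ hy₀
  have hconst : ∀ x, x ≠ 0 → ∀ y, y ≠ 0 → F x y = γ • vecMulVec (a x) (b y) := by
    intro x hx y hy
    obtain ⟨c, hc⟩ := hpoint x hx y hy
    obtain ⟨cy, hcy⟩ := hpoint x₀ hx₀ y hy
    have hcc : c = cy := by
      obtain ⟨z, hz0, hz1, hz2⟩ := exists_not_parallel_pair hp hx hx₀
      obtain ⟨cz, hcz⟩ := hpoint z hz0 y hy
      have e1 : c = cz := hH x z y hx hz0 hy hz1 c cz hc hcz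
      have e2 : cz = cy := (hH x₀ z y hx₀ hz0 hy hz2 cy cz hcy hcz).symm
      rw [e1, e2]
    have hcyγ : cy = γ := by
      obtain ⟨w, hw0, hw1, hw2⟩ := exists_not_parallel_pair hq hy hy₀
      obtain ⟨cw, hcw⟩ := hpoint x₀ hx₀ w hw0
      have e1 : cy = cw := hH' x₀ y w hx₀ hy hw0 hw1 cy cw hcy hcw
      have e2 : cw = γ := (hH' x₀ y₀ w hx₀ hy₀ hw0 hw2 γ cw hγ hcw).symm
      rw [e1, e2]
    rw [hc, hcc, hcyγ]
  have hγ0 : γ ≠ 0 := by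
    intro h0
    exact hnz x₀ hx₀ y₀ hy₀ (by rw [hγ, h0, zero_smul])
  refine ⟨γ • a, b, ?_, hb, ?_⟩
  · intro x hx
    simp only [LinearMap.smul_apply]
    exact smul_ne_zero hγ0 (ha x hx)
  · intro x y
    by_cases hx : x = 0
    · subst hx
      simp [vecMulVec_eq_zero_left]
    by_cases hy : y = 0
    · subst hy
      simp [vecMulVec_eq_zero_right]
    · rw [hconst x hx y hy]
      simp only [LinearMap.smul_apply]
      rw [smul_vecMulVec_left]

lemma vecMulVec_right_inj {x : Fin m → ℂ} (hx : x ≠ 0) :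
    Function.Injective fun y : Fin n → ℂ => vecMulVec x y := by
  obtain ⟨i, hi'⟩ := Function.ne_iff.1 hx
  have hi : x i ≠ 0 := by simpa using hi'
  intro y y' h
  funext j
  have := congrFun (congrFun h i) j
  simp only [vecMulVec_apply] at this
  exact mul_left_cancel₀ hi this

lemma vecMulVec_left_inj {y : Fin n → ℂ} (hy : y ≠ 0) :
    Function.Injective fun x : Fin m → ℂ => vecMulVec x y := by
  obtain ⟨j, hj'⟩ := Function.ne_iff.1 hy
  have hj : y j ≠ 0 := by simpa using hj'
  intro x x' h
  funext i
  have := congrFun (congrFun h i) j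
  simp only [vecMulVec_apply] at this
  exact mul_right_cancel₀ hj this

/-- `vecMulVec` as a bilinear map. -/
def vvBilin (m n : ℕ) : (Fin m → ℂ) →ₗ[ℂ] (Fin n → ℂ) →ₗ[ℂ] Matrix (Fin m) (Fin n) ℂ where
  toFun x :=
    { toFun := fun y => vecMulVec x y
      map_add' := fun y y' => vecMulVec_add_right x y y'
      map_smul' := fun c y => by simp only [RingHom.id_apply]; rw [smul_vecMulVec_right] }
  map_add' x x' := by
    apply LinearMap.ext
    intro y
    simp only [LinearMap.coe_mk, AddHom.coe_mk, LinearMap.add_apply]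
    exact vecMulVec_add_left x x' y
  map_smul' c x := by
    apply LinearMap.ext
    intro y
    simp only [LinearMap.coe_mk, AddHom.coe_mk, RingHom.id_apply, LinearMap.smul_apply]
    exact smul_vecMulVec_left c x y

@[simp] lemma vvBilin_apply (x : Fin m → ℂ) (y : Fin n → ℂ) :
    vvBilin m n x y = vecMulVec x y := rfl

lemma matrix_sum_rankone (X : Matrix (Fin m) (Fin n) ℂ) :
    X = ∑ k, ∑ l, X k l • vecMulVec (Pi.single k 1) (Pi.single l 1) := by
  ext i j
  rw [Matrix.sum_apply]
  simp only [Matrix.sum_apply, Matrix.smul_apply, vecMulVec_apply, smul_eq_mul,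
    Pi.single_apply]
  rw [Finset.sum_comm]
  rw [Finset.sum_eq_single j]
  · rw [Finset.sum_eq_single i]
    · simp
    · intro k _ hk; simp [Ne.symm hk]
    · intro h; exact absurd (Finset.mem_univ i) h
  · intro l _ hl; simp [Ne.symm hl]
  · intro h; exact absurd (Finset.mem_univ j) h

lemma span_rankone {r s : ℕ} (P : Submodule ℂ (Matrix (Fin r) (Fin s) ℂ))
    (φ : Matrix (Fin m) (Fin n) ℂ →ₗ[ℂ] Matrix (Fin r) (Fin s) ℂ)
    (h : ∀ (k : Fin m) (l : Fin n), φ (vecMulVec (Pi.single k 1) (Pi.single l 1)) ∈ P)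
    (X : Matrix (Fin m) (Fin n) ℂ) : φ X ∈ P := by
  rw [matrix_sum_rankone X, map_sum]
  refine Submodule.sum_mem _ fun k _ => ?_
  rw [map_sum]
  refine Submodule.sum_mem _ fun l _ => ?_
  rw [_root_.map_smul]
  exact Submodule.smul_mem _ _ (h k l)

/-- Matrices all of whose columns lie in `span {u}`. -/
def colSub {r s : ℕ} (u : Fin r → ℂ) : Submodule ℂ (Matrix (Fin r) (Fin s) ℂ) where
  carrier := {M | ∀ j, (fun i => M i j) ∈ Submodule.span ℂ {u}}
  add_mem' := by
    intro a b ha hb j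
    have h : (fun i => (a + b) i j) = (fun i => a i j) + (fun i => b i j) := by
      funext i; simp [Matrix.add_apply]
    rw [Set.mem_setOf_eq] at *
    show (fun i => (a + b) i j) ∈ _
    rw [h]
    exact Submodule.add_mem _ (ha j) (hb j)
  zero_mem' := by
    intro j
    show (fun i => (0 : Matrix (Fin r) (Fin s) ℂ) i j) ∈ _
    have h : (fun i => (0 : Matrix (Fin r) (Fin s) ℂ) i j) = 0 := by
      funext i; simp
    rw [h]
    exact Submodule.zero_mem _
  smul_mem' := by
    intro c M hM j
    show (fun i => (c • M) i j) ∈ _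
    have h : (fun i => (c • M) i j) = c • (fun i => M i j) := by
      funext i; simp
    rw [h]
    exact Submodule.smul_mem _ _ (hM j)

/-- Matrices all of whose rows lie in `span {v}`. -/
def rowSub {r s : ℕ} (v : Fin s → ℂ) : Submodule ℂ (Matrix (Fin r) (Fin s) ℂ) where
  carrier := {M | ∀ i, (fun j => M i j) ∈ Submodule.span ℂ {v}}
  add_mem' := by
    intro a b ha hb i
    show (fun j => (a + b) i j) ∈ _
    have h : (fun j => (a + b) i j) = (fun j => a i j) + (fun j => b i j) := by
      funext j; simp [Matrix.add_apply]
    rw [h]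
    exact Submodule.add_mem _ (ha i) (hb i)
  zero_mem' := by
    intro i
    show (fun j => (0 : Matrix (Fin r) (Fin s) ℂ) i j) ∈ _
    have h : (fun j => (0 : Matrix (Fin r) (Fin s) ℂ) i j) = 0 := by
      funext j; simp
    rw [h]
    exact Submodule.zero_mem _
  smul_mem' := by
    intro c M hM i
    show (fun j => (c • M) i j) ∈ _
    have h : (fun j => (c • M) i j) = c • (fun j => M i j) := by
      funext j; simp
    rw [h]
    exact Submodule.smul_mem _ _ (hM i)

lemma mem_colSub_iff {r s : ℕ} (u : Fin r → ℂ) (M : Matrix (Fin r) (Fin s) ℂ) :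
    M ∈ colSub u ↔ ∀ j, (fun i => M i j) ∈ Submodule.span ℂ {u} := Iff.rfl

lemma mem_rowSub_iff {r s : ℕ} (v : Fin s → ℂ) (M : Matrix (Fin r) (Fin s) ℂ) :
    M ∈ rowSub v ↔ ∀ i, (fun j => M i j) ∈ Submodule.span ℂ {v} := Iff.rfl

lemma exists_not_mem_span_singleton (hp : 2 ≤ p) (u : Fin p → ℂ) :
    ∃ w, w ∉ Submodule.span ℂ {u} := by
  by_contra hcon
  push_neg at hcon
  have htop : Submodule.span ℂ {u} = ⊤ := Submodule.eq_top_iff'.2 hcon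
  have h2 : Module.finrank ℂ ↥(Submodule.span ℂ {u}) = Module.finrank ℂ (Fin p → ℂ) := by
    rw [htop]
    exact finrank_top ℂ (Fin p → ℂ)
  have h3 : Module.finrank ℂ (Fin p → ℂ) = p := by simp
  by_cases hu : u = 0
  · subst hu
    rw [Submodule.span_zero_singleton] at h2
    rw [finrank_bot] at h2
    omega
  · have h1 := finrank_span_singleton (K := ℂ) hu
    omega

lemma units_of_sandwich {m n : ℕ} (hm : 0 < m) (hn : 0 < n)
    (φ : Matrix (Fin m) (Fin n) ℂ →ₗ[ℂ] Matrix (Fin m) (Fin n) ℂ)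
    (hsurj : Function.Surjective φ)
    (A : Matrix (Fin m) (Fin m) ℂ) (B : Matrix (Fin n) (Fin n) ℂ)
    (G : Matrix (Fin m) (Fin n) ℂ → Matrix (Fin m) (Fin n) ℂ)
    (hG : ∀ X, φ X = A * G X * B) : IsUnit A.det ∧ IsUnit B.det := by
  have i₀ : Fin m := ⟨0, hm⟩
  have j₀ : Fin n := ⟨0, hn⟩
  constructor
  · rw [← Matrix.isUnit_iff_isUnit_det, ← Matrix.mulVec_surjective_iff_isUnit]
    intro w
    obtain ⟨X, hX⟩ := hsurj (vecMulVec w (Pi.single j₀ 1))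
    rw [hG X] at hX
    refine ⟨fun k => (G X * B) k j₀, ?_⟩
    funext i
    have h1 := congrFun (congrFun hX i) j₀
    rw [Matrix.mul_assoc] at h1
    rw [Matrix.vecMulVec_apply] at h1
    simp only [Pi.single_eq_same, mul_one] at h1
    rw [← h1, Matrix.mul_apply]
    rfl
  · rw [← Matrix.isUnit_iff_isUnit_det, ← Matrix.vecMul_surjective_iff_isUnit]
    intro w
    obtain ⟨X, hX⟩ := hsurj (vecMulVec (Pi.single i₀ 1) w)
    rw [hG X] at hX
    refine ⟨fun l => (A * G X) i₀ l, ?_⟩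
    funext j
    have h1 := congrFun (congrFun hX i₀) j
    rw [Matrix.vecMulVec_apply] at h1
    simp only [Pi.single_eq_same, one_mul] at h1
    rw [← h1, Matrix.mul_apply]
    rfl
theorem main_abstract {m n : ℕ} (hm : 2 ≤ m) (hn : 2 ≤ n)
    (φ : Matrix (Fin m) (Fin n) ℂ →ₗ[ℂ] Matrix (Fin m) (Fin n) ℂ)
    (hinj : Function.Injective φ) (hsurj : Function.Surjective φ)
    (hrank : ∀ X, (φ X).rank = X.rank) :
    (∃ (A : Matrix (Fin m) (Fin m) ℂ) (B : Matrix (Fin n) (Fin n) ℂ),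
        IsUnit A.det ∧ IsUnit B.det ∧ ∀ X, φ X = A * X * B) ∨
    (∃ (h : m = n) (A : Matrix (Fin m) (Fin m) ℂ) (B : Matrix (Fin n) (Fin n) ℂ),
        IsUnit A.det ∧ IsUnit B.det ∧
        ∀ X, φ X = A * (Xᵀ.submatrix (finCongr h) (finCongr h.symm)) * B) := by
  classical
  set F : (Fin m → ℂ) →ₗ[ℂ] (Fin n → ℂ) →ₗ[ℂ] Matrix (Fin m) (Fin n) ℂ :=
    (vvBilin m n).compr₂ φ with hFdef
  have hFapp : ∀ x y, F x y = φ (vecMulVec x y) := fun x y => rfl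
  have hzero : ∀ X, φ X = 0 → X = 0 := fun X h => hinj (by rw [h, map_zero])
  have hnz : ∀ x, x ≠ 0 → ∀ y, y ≠ 0 → F x y ≠ 0 := by
    intro x hx y hy h
    rw [hFapp] at h
    exact vecMulVec_ne_zero hx hy (hzero _ h)
  have hr1 : ∀ x y, (F x y).rank ≤ 1 := by
    intro x y
    rw [hFapp, hrank]
    exact rank_vecMulVec_le_one x y
  have hFinj : ∀ x, x ≠ 0 → Function.Injective (F x) := by
    intro x hx y y' h
    rw [hFapp, hFapp] at h
    exact vecMulVec_right_inj hx (hinj h)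
  have hFinj' : ∀ y, y ≠ 0 → Function.Injective (F.flip y) := by
    intro y hy x x' h
    have h' : φ (vecMulVec x y) = φ (vecMulVec x' y) := h
    exact vecMulVec_left_inj hy (hinj h')
  have step1 : ∀ x, x ≠ 0 → (∃ u, u ≠ 0 ∧ ∀ y, ∃ v, F x y = vecMulVec u v) ∨
      (∃ v, v ≠ 0 ∧ ∀ y, ∃ u, F x y = vecMulVec u v) :=
    fun x hx => classify hn (F x) (hFinj x hx) (fun y => hr1 x y)
  have step1' : ∀ y, y ≠ 0 → (∃ u, u ≠ 0 ∧ ∀ x, ∃ v, F x y = vecMulVec u v) ∨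
      (∃ v, v ≠ 0 ∧ ∀ x, ∃ u, F x y = vecMulVec u v) :=
    fun y hy => classify hm (F.flip y) (hFinj' y hy) (fun x => hr1 x y)
  -- cross-type contradiction
  have hcross : ∀ x, x ≠ 0 → (∃ u, u ≠ 0 ∧ ∀ y, ∃ v, F x y = vecMulVec u v) →
      ∀ x₂, x₂ ≠ 0 → (∀ c : ℂ, x₂ ≠ c • x) →
      (∃ v, v ≠ 0 ∧ ∀ y, ∃ u, F x₂ y = vecMulVec u v) → False := by
    rintro x hx ⟨u₁, hu₁, hcall⟩ x₂ hx₂ hnp ⟨v₂, hv₂, hrall⟩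
    set M₀ := vecMulVec u₁ v₂ with hM₀
    have hcancel : ∀ z : Fin m → ℂ, z ≠ 0 → ∀ ya yb : Fin n → ℂ, (∀ c : ℂ, yb ≠ c • ya) →
        ∀ ca cb : ℂ, ca ≠ 0 → F z ya = ca • M₀ → F z yb = cb • M₀ → False := by
      intro z hz ya yb hnpy ca cb hca h1 h2
      have h3 : F z (cb • ya - ca • yb) = 0 := by
        rw [map_sub, _root_.map_smul, _root_.map_smul, h1, h2, smul_smul, smul_smul,
          mul_comm, sub_self]
      have h3' : φ (vecMulVec z (cb • ya - ca • yb)) = 0 := by rw [← hFapp]; exact h3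
      have h5 : cb • ya - ca • yb = 0 := eq_zero_of_vecMulVec_right (hzero _ h3') hz
      have h6 : ca • yb = cb • ya := by linear_combination (norm := module) -h5
      have h7 : yb = (ca⁻¹ * cb) • ya := by
        have h8 := congrArg (fun w => ca⁻¹ • w) h6
        simpa [smul_smul, inv_mul_cancel₀ hca] using h8
      exact hnpy _ h7
    have hdi : ∀ y, y ≠ 0 →
        (∃ c : ℂ, c ≠ 0 ∧ F x₂ y = c • M₀) ∨ (∃ c : ℂ, c ≠ 0 ∧ F x y = c • M₀) := by
      intro y hy
      obtain ⟨ay, hay⟩ := hcall y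
      have hay0 : ay ≠ 0 := by
        intro h0; exact hnz x hx y hy (by rw [hay, h0, vecMulVec_eq_zero_right])
      obtain ⟨by', hby⟩ := hrall y
      have hby0 : by' ≠ 0 := by
        intro h0; exact hnz x₂ hx₂ y hy (by rw [hby, h0, vecMulVec_eq_zero_left])
      have hsum : (vecMulVec u₁ ay + vecMulVec by' v₂).rank ≤ 1 := by
        have hF2 : F (x + x₂) y = F x y + F x₂ y := by rw [map_add]; rfl
        have h := hr1 (x + x₂) y
        rw [hF2, hay, hby] at h
        exact h
      rcases rank_le_one_alternative hu₁ hby0 hay0 hv₂ hsum with ⟨c, hc⟩ | ⟨c, hc⟩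
      · left
        have hc0 : c ≠ 0 := by rintro rfl; rw [zero_smul] at hc; exact hby0 hc
        exact ⟨c, hc0, by rw [hby, hc, smul_vecMulVec_left]⟩
      · right
        have hc0 : c ≠ 0 := by rintro rfl; rw [zero_smul] at hc; exact hv₂ hc
        refine ⟨c⁻¹, inv_ne_zero hc0, ?_⟩
        have hayv : ay = c⁻¹ • v₂ := by
          rw [hc, smul_smul, inv_mul_cancel₀ hc0, one_smul]
        rw [hay, hayv, smul_vecMulVec_right]
    have h01 : (⟨0, by omega⟩ : Fin n) ≠ ⟨1, by omega⟩ := by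
      intro h; simpa using congrArg Fin.val h
    set y₁ : Fin n → ℂ := Pi.single ⟨0, by omega⟩ 1 with hy₁def
    set y₂ : Fin n → ℂ := Pi.single ⟨1, by omega⟩ 1 with hy₂def
    have hy₁ : y₁ ≠ 0 := single_ne_zero' _
    have hy₂ : y₂ ≠ 0 := single_ne_zero' _
    have hy₃ : y₁ + y₂ ≠ 0 := by
      intro h
      have h9 := congrFun h ⟨0, by omega⟩
      simp [hy₁def, hy₂def, Pi.single_apply, h01, Ne.symm h01] at h9
    have hnp21 : ∀ c : ℂ, y₂ ≠ c • y₁ := single_not_parallel h01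
    have hnp31 : ∀ c : ℂ, y₁ + y₂ ≠ c • y₁ := by
      intro c h
      have h9 := congrFun h ⟨1, by omega⟩
      simp [hy₁def, hy₂def, Pi.single_apply, h01, Ne.symm h01] at h9
    have hnp32 : ∀ c : ℂ, y₁ + y₂ ≠ c • y₂ := by
      intro c h
      have h9 := congrFun h ⟨0, by omega⟩
      simp [hy₁def, hy₂def, Pi.single_apply, h01, Ne.symm h01] at h9
    rcases hdi y₁ hy₁ with ⟨c1, hc1, h1⟩ | ⟨c1, hc1, h1⟩
    · rcases hdi y₂ hy₂ with ⟨c2, hc2, h2⟩ | ⟨c2, hc2, h2⟩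
      · exact hcancel x₂ hx₂ y₁ y₂ hnp21 c1 c2 hc1 h1 h2
      · rcases hdi (y₁ + y₂) hy₃ with ⟨c3, hc3, h3⟩ | ⟨c3, hc3, h3⟩
        · exact hcancel x₂ hx₂ y₁ (y₁ + y₂) hnp31 c1 c3 hc1 h1 h3
        · exact hcancel x hx y₂ (y₁ + y₂) hnp32 c2 c3 hc2 h2 h3
    · rcases hdi y₂ hy₂ with ⟨c2, hc2, h2⟩ | ⟨c2, hc2, h2⟩
      · rcases hdi (y₁ + y₂) hy₃ with ⟨c3, hc3, h3⟩ | ⟨c3, hc3, h3⟩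
        · exact hcancel x₂ hx₂ y₂ (y₁ + y₂) hnp32 c2 c3 hc2 h2 h3
        · exact hcancel x hx y₁ (y₁ + y₂) hnp31 c1 c3 hc1 h1 h3
      · exact hcancel x hx y₁ y₂ hnp21 c1 c2 hc1 h1 h2
  -- uniform type
  have step3 : (∀ x, x ≠ 0 → ∃ u, u ≠ 0 ∧ ∀ y, ∃ v, F x y = vecMulVec u v) ∨
      (∀ x, x ≠ 0 → ∃ v, v ≠ 0 ∧ ∀ y, ∃ u, F x y = vecMulVec u v) := by
    by_cases hall : ∀ x, x ≠ 0 → ∃ u, u ≠ 0 ∧ ∀ y, ∃ v, F x y = vecMulVec u v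
    · exact Or.inl hall
    right
    obtain ⟨x₂, hx₂p⟩ := not_forall.1 hall
    have hx₂ne : x₂ ≠ 0 := by
      intro h0
      exact hx₂p (fun h => absurd h0 h)
    have hnotcol : ¬ (∃ u, u ≠ 0 ∧ ∀ y, ∃ v, F x₂ y = vecMulVec u v) :=
      fun hc => hx₂p (fun _ => hc)
    have hrow₂ := (step1 x₂ hx₂ne).resolve_left hnotcol
    intro x hx
    rcases step1 x hx with hcol | hrow
    · exfalso
      by_cases hpar : ∃ c : ℂ, x₂ = c • x
      · obtain ⟨c, hc⟩ := hpar
        apply hnotcol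
        obtain ⟨u, hu, hall'⟩ := hcol
        refine ⟨u, hu, fun y => ?_⟩
        obtain ⟨v, hv⟩ := hall' y
        refine ⟨c • v, ?_⟩
        have hFs : F x₂ y = c • F x y := by
          rw [hc, _root_.map_smul]
          rfl
        rw [hFs, hv, smul_vecMulVec_right]
      · push_neg at hpar
        exact hcross x hx hcol x₂ hx₂ne hpar hrow₂
    · exact hrow
  -- surjectivity obstructions
  have hsurjcol : ∀ u : Fin m → ℂ,
      (∀ x, x ≠ 0 → ∀ y', F x y' ∈ colSub (s := n) u) → False := by
    intro u hmem
    obtain ⟨w, hw⟩ := exists_not_mem_span_singleton hm u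
    obtain ⟨X, hX⟩ := hsurj (vecMulVec w (Pi.single ⟨0, by omega⟩ 1))
    have hXmem : φ X ∈ colSub (s := n) u :=
      span_rankone _ φ (fun k l => hmem _ (single_ne_zero' k) _) X
    rw [hX] at hXmem
    have h2 := (mem_colSub_iff _ _).1 hXmem ⟨0, by omega⟩
    have hcol0 : (fun i => vecMulVec w (Pi.single (⟨0, by omega⟩ : Fin n) 1) i ⟨0, by omega⟩) = w := by
      funext i; simp [vecMulVec_apply]
    rw [hcol0] at h2
    exact hw h2
  have hsurjrow : ∀ v : Fin n → ℂ,
      (∀ x, x ≠ 0 → ∀ y', F x y' ∈ rowSub (r := m) v) → False := by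
    intro v hmem
    obtain ⟨w, hw⟩ := exists_not_mem_span_singleton hn v
    obtain ⟨X, hX⟩ := hsurj (vecMulVec (Pi.single ⟨0, by omega⟩ 1) w)
    have hXmem : φ X ∈ rowSub (r := m) v :=
      span_rankone _ φ (fun k l => hmem _ (single_ne_zero' k) _) X
    rw [hX] at hXmem
    have h2 := (mem_rowSub_iff _ _).1 hXmem ⟨0, by omega⟩
    have hrow0 : (fun j => vecMulVec (Pi.single (⟨0, by omega⟩ : Fin m) 1) w ⟨0, by omega⟩ j) = w := by
      funext j; simp [vecMulVec_apply]
    rw [hrow0] at h2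
    exact hw h2
  rcases step3 with hcolall | hrowall
  · -- column case
    have hrowS : ∀ y, y ≠ 0 → ∃ v, v ≠ 0 ∧ ∀ x, ∃ u, F x y = vecMulVec u v := by
      intro y hy
      rcases step1' y hy with ⟨u, hu, hallx⟩ | h
      · exfalso
        apply hsurjcol u
        intro x hx y'
        obtain ⟨u₁, hu₁, hally⟩ := hcolall x hx
        obtain ⟨v', hv'⟩ := hallx x
        obtain ⟨v₁, hv₁⟩ := hally y
        have hne : F x y ≠ 0 := hnz x hx y hy
        have hv₁0 : v₁ ≠ 0 := fun h0 => hne (by rw [hv₁, h0, vecMulVec_eq_zero_right])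
        have hee : vecMulVec u₁ v₁ = vecMulVec u v' := by rw [← hv₁, hv']
        obtain ⟨c, hc0, hcu, hcv⟩ := decomp_unique hee hu₁ hv₁0
        rw [mem_colSub_iff]
        intro j
        obtain ⟨vy', hvy'⟩ := hally y'
        rw [Submodule.mem_span_singleton]
        refine ⟨c⁻¹ * vy' j, ?_⟩
        funext i
        have e1 := congrFun (congrFun hvy' i) j
        have e2 : u i = c * u₁ i := by rw [hcu, Pi.smul_apply, smul_eq_mul]
        rw [Pi.smul_apply, smul_eq_mul, e2, e1, vecMulVec_apply]
        field_simp
      · exact h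
    obtain ⟨a, b, ha, hb, heq⟩ := core hm hn F hnz hcolall hrowS
    set A : Matrix (Fin m) (Fin m) ℂ := Matrix.of (fun i k => a (Pi.single k 1) i) with hA
    set B : Matrix (Fin n) (Fin n) ℂ := Matrix.of (fun l j => b (Pi.single l 1) j) with hB
    have hφX : ∀ X, φ X = A * X * B := by
      intro X
      calc φ X = φ (∑ k, ∑ l, X k l • vecMulVec (Pi.single k 1) (Pi.single l 1)) := by
            rw [← matrix_sum_rankone X]
        _ = ∑ k, ∑ l, X k l • vecMulVec (a (Pi.single k 1)) (b (Pi.single l 1)) := by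
            rw [map_sum]
            refine Finset.sum_congr rfl fun k _ => ?_
            rw [map_sum]
            refine Finset.sum_congr rfl fun l _ => ?_
            rw [_root_.map_smul]
            congr 1
            exact heq _ _
        _ = A * X * B := by
            ext i j
            have hL : (∑ k, ∑ l, X k l • vecMulVec (a (Pi.single k 1)) (b (Pi.single l 1))) i j
                = ∑ k, ∑ l, X k l * (a (Pi.single k 1) i * b (Pi.single l 1) j) := by
              rw [Matrix.sum_apply]
              refine Finset.sum_congr rfl fun k _ => ?_
              rw [Matrix.sum_apply]
              refine Finset.sum_congr rfl fun l _ => ?_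
              rw [Matrix.smul_apply, vecMulVec_apply, smul_eq_mul]
            have hR : (A * X * B) i j = ∑ l, ∑ k, A i k * X k l * B l j := by
              rw [Matrix.mul_apply]
              refine Finset.sum_congr rfl fun l _ => ?_
              rw [Matrix.mul_apply, Finset.sum_mul]
            rw [hL, hR, Finset.sum_comm]
            refine Finset.sum_congr rfl fun l _ => ?_
            refine Finset.sum_congr rfl fun k _ => ?_
            rw [hA, hB]
            simp only [Matrix.of_apply]
            ring
    have hdet := units_of_sandwich (by omega) (by omega) φ hsurj A B (fun X => X) hφX
    exact Or.inl ⟨A, B, hdet.1, hdet.2, hφX⟩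
  · -- row case
    have hcolS : ∀ y, y ≠ 0 → ∃ u, u ≠ 0 ∧ ∀ x, ∃ v, F x y = vecMulVec u v := by
      intro y hy
      rcases step1' y hy with h | ⟨v, hv, hallx⟩
      · exact h
      · exfalso
        apply hsurjrow v
        intro x hx y'
        obtain ⟨v₁, hv₁, hally⟩ := hrowall x hx
        obtain ⟨u', hu'⟩ := hallx x
        obtain ⟨u₁, hu₁e⟩ := hally y
        have hne : F x y ≠ 0 := hnz x hx y hy
        have hu₁0 : u₁ ≠ 0 := fun h0 => hne (by rw [hu₁e, h0, vecMulVec_eq_zero_left])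
        have hee : vecMulVec u₁ v₁ = vecMulVec u' v := by rw [← hu₁e, hu']
        obtain ⟨c, hc0, hcu, hcv⟩ := decomp_unique hee hu₁0 hv₁
        rw [mem_rowSub_iff]
        intro i
        obtain ⟨uy', huy'⟩ := hally y'
        rw [Submodule.mem_span_singleton]
        refine ⟨uy' i * c, ?_⟩
        funext j
        have e1 := congrFun (congrFun huy' i) j
        have e2 : v₁ j = c * v j := by rw [hcv, Pi.smul_apply, smul_eq_mul]
        rw [Pi.smul_apply, smul_eq_mul, e1, vecMulVec_apply, e2]
        ring
    have hnz' : ∀ y, y ≠ 0 → ∀ x, x ≠ 0 → F.flip y x ≠ 0 := fun y hy x hx => hnz x hx y hy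
    obtain ⟨a, b, ha, hb, heq⟩ := core hn hm F.flip hnz' hcolS hrowall
    have hainj : Function.Injective a := by
      intro z z' h
      by_contra hne
      have h0 : a (z - z') = 0 := by rw [map_sub, h, sub_self]
      exact ha (z - z') (fun h1 => hne (sub_eq_zero.1 h1)) h0
    have hbinj : Function.Injective b := by
      intro z z' h
      by_contra hne
      have h0 : b (z - z') = 0 := by rw [map_sub, h, sub_self]
      exact hb (z - z') (fun h1 => hne (sub_eq_zero.1 h1)) h0
    have hmn : m = n := by
      have h1 : n ≤ m := by
        have := LinearMap.finrank_le_finrank_of_injective hainj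
        simpa using this
      have h2 : m ≤ n := by
        have := LinearMap.finrank_le_finrank_of_injective hbinj
        simpa using this
      omega
    refine Or.inr ⟨hmn, ?_⟩
    set A : Matrix (Fin m) (Fin m) ℂ :=
      Matrix.of (fun i k => a (Pi.single (finCongr hmn k) 1) i) with hA
    set B : Matrix (Fin n) (Fin n) ℂ :=
      Matrix.of (fun l j => b (Pi.single (finCongr hmn.symm l) 1) j) with hB
    have hφX : ∀ X, φ X = A * (Xᵀ.submatrix (finCongr hmn) (finCongr hmn.symm)) * B := by
      intro X
      calc φ X = φ (∑ k, ∑ l, X k l • vecMulVec (Pi.single k 1) (Pi.single l 1)) := by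
            rw [← matrix_sum_rankone X]
        _ = ∑ k, ∑ l, X k l • vecMulVec (a (Pi.single l 1)) (b (Pi.single k 1)) := by
            rw [map_sum]
            refine Finset.sum_congr rfl fun k _ => ?_
            rw [map_sum]
            refine Finset.sum_congr rfl fun l _ => ?_
            rw [_root_.map_smul]
            congr 1
            exact heq _ _
        _ = A * (Xᵀ.submatrix (finCongr hmn) (finCongr hmn.symm)) * B := by
            ext i j
            have hL : (∑ k, ∑ l, X k l • vecMulVec (a (Pi.single l 1)) (b (Pi.single k 1))) i j
                = ∑ k, ∑ l, X k l * (a (Pi.single l 1) i * b (Pi.single k 1) j) := by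
              rw [Matrix.sum_apply]
              refine Finset.sum_congr rfl fun k _ => ?_
              rw [Matrix.sum_apply]
              refine Finset.sum_congr rfl fun l _ => ?_
              rw [Matrix.smul_apply, vecMulVec_apply, smul_eq_mul]
            have hR : (A * (Xᵀ.submatrix (finCongr hmn) (finCongr hmn.symm)) * B) i j
                = ∑ q, ∑ p, A i p * X (finCongr hmn.symm q) (finCongr hmn p) * B q j := by
              rw [Matrix.mul_apply]
              refine Finset.sum_congr rfl fun q _ => ?_
              rw [Matrix.mul_apply, Finset.sum_mul]
              refine Finset.sum_congr rfl fun p _ => ?_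
              rfl
            rw [hL, hR]
            refine Fintype.sum_equiv (finCongr hmn) _ _ fun k => ?_
            refine Fintype.sum_equiv (finCongr hmn).symm _ _ fun l => ?_
            have hk : finCongr hmn.symm (finCongr hmn k) = k := by
              simp [← finCongr_symm]
            have hl : finCongr hmn ((finCongr hmn).symm l) = l := by
              simp
            rw [hA, hB]
            simp only [Matrix.of_apply, hk, hl, ← finCongr_symm]
            ring
    have hdet := units_of_sandwich (by omega) (by omega) φ hsurj A B
      (fun X => Xᵀ.submatrix (finCongr hmn) (finCongr hmn.symm)) hφX
    exact ⟨A, B, hdet.1, hdet.2, hφX⟩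
lemma fold_vec {m n : ℕ} (X : Matrix (Fin m) (Fin n) ℂ) : fold (_root_.vec X) = X := by
  ext i j
  simp [fold, _root_.vec]

lemma vec_fold {m n : ℕ} (a : Fin (m * n) → ℂ) : _root_.vec (fold a) = a := by
  funext r
  simp [fold, _root_.vec]

def vecL (m n : ℕ) : Matrix (Fin m) (Fin n) ℂ →ₗ[ℂ] (Fin (m * n) → ℂ) where
  toFun := _root_.vec
  map_add' X Y := by funext r; simp [_root_.vec]
  map_smul' c X := by funext r; simp [_root_.vec]

def foldL (m n : ℕ) : (Fin (m * n) → ℂ) →ₗ[ℂ] Matrix (Fin m) (Fin n) ℂ where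
  toFun := fold
  map_add' a b := by ext i j; simp [fold]
  map_smul' c a := by ext i j; simp [fold]

lemma eq_of_mulVec_eq {k : ℕ} {M N : Matrix (Fin k) (Fin k) ℂ}
    (h : ∀ a, M.mulVec a = N.mulVec a) : M = N := by
  ext i j
  have h2 := h (Pi.single j 1)
  rw [mulVec_single, mulVec_single] at h2
  have h3 := congrFun h2 i
  simpa using h3

lemma kron_mulVec {I₁ I₂ : ℕ} (A₁ : Matrix (Fin I₂) (Fin I₂) ℂ)
    (A₂ : Matrix (Fin I₁) (Fin I₁) ℂ) (X : Matrix (Fin I₁) (Fin I₂) ℂ) :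
    (kron A₁ A₂).mulVec (_root_.vec X) = _root_.vec (A₂ * X * A₁ᵀ) := by
  funext r
  have hL : (kron A₁ A₂).mulVec (_root_.vec X) r
      = ∑ k : Fin I₁, ∑ l : Fin I₂,
          A₁ ((vecIdx I₁ I₂).symm r).2 l * A₂ ((vecIdx I₁ I₂).symm r).1 k * X k l := by
    rw [mulVec, dotProduct]
    rw [← Equiv.sum_comp (vecIdx I₁ I₂) (fun t => kron A₁ A₂ r t * _root_.vec X t)]
    rw [Fintype.sum_prod_type]
    refine Finset.sum_congr rfl fun k _ => ?_
    refine Finset.sum_congr rfl fun l _ => ?_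
    show kron A₁ A₂ r (vecIdx I₁ I₂ (k, l)) * _root_.vec X (vecIdx I₁ I₂ (k, l)) = _
    rw [show kron A₁ A₂ r (vecIdx I₁ I₂ (k, l))
        = A₁ ((vecIdx I₁ I₂).symm r).2 ((vecIdx I₁ I₂).symm (vecIdx I₁ I₂ (k, l))).2 *
          A₂ ((vecIdx I₁ I₂).symm r).1 ((vecIdx I₁ I₂).symm (vecIdx I₁ I₂ (k, l))).1 from rfl]
    rw [show _root_.vec X (vecIdx I₁ I₂ (k, l))
        = X ((vecIdx I₁ I₂).symm (vecIdx I₁ I₂ (k, l))).1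
            ((vecIdx I₁ I₂).symm (vecIdx I₁ I₂ (k, l))).2 from rfl]
    rw [Equiv.symm_apply_apply]
  have hR : _root_.vec (A₂ * X * A₁ᵀ) r = ∑ l : Fin I₂, ∑ k : Fin I₁,
      A₂ ((vecIdx I₁ I₂).symm r).1 k * X k l * A₁ ((vecIdx I₁ I₂).symm r).2 l := by
    show (A₂ * X * A₁ᵀ) ((vecIdx I₁ I₂).symm r).1 ((vecIdx I₁ I₂).symm r).2 = _
    rw [Matrix.mul_apply]
    refine Finset.sum_congr rfl fun l _ => ?_
    rw [Matrix.mul_apply, Finset.sum_mul]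
    refine Finset.sum_congr rfl fun k _ => ?_
    rw [Matrix.transpose_apply]
  rw [hL, hR, Finset.sum_comm]
  refine Finset.sum_congr rfl fun l _ => ?_
  refine Finset.sum_congr rfl fun k _ => ?_
  ring


def oneEquivL (I₁ I₂ : ℕ) (h : I₁ = 1) : Fin I₂ ≃ Fin (I₁ * I₂) where
  toFun := fun j => vecIdx I₁ I₂ (⟨0, by omega⟩, j)
  invFun := fun r => ((vecIdx I₁ I₂).symm r).2
  left_inv := fun j => by simp
  right_inv := fun r => by
    have h2 : ((vecIdx I₁ I₂).symm r).1 = ⟨0, by omega⟩ := by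
      apply Fin.ext
      have h3 := (((vecIdx I₁ I₂).symm r).1).isLt
      simp only [Fin.val_mk]
      omega
    have h3 : ((vecIdx I₁ I₂).symm r) =
        ((⟨0, by omega⟩ : Fin I₁), ((vecIdx I₁ I₂).symm r).2) := by
      rw [Prod.ext_iff]
      exact ⟨h2, rfl⟩
    show vecIdx I₁ I₂ (⟨0, by omega⟩, ((vecIdx I₁ I₂).symm r).2) = r
    conv_rhs => rw [← Equiv.apply_symm_apply (vecIdx I₁ I₂) r]
    rw [h3]

def oneEquivR (I₁ I₂ : ℕ) (h : I₂ = 1) : Fin I₁ ≃ Fin (I₁ * I₂) where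
  toFun := fun i => vecIdx I₁ I₂ (i, ⟨0, by omega⟩)
  invFun := fun r => ((vecIdx I₁ I₂).symm r).1
  left_inv := fun i => by simp
  right_inv := fun r => by
    have h2 : ((vecIdx I₁ I₂).symm r).2 = ⟨0, by omega⟩ := by
      apply Fin.ext
      have h3 := (((vecIdx I₁ I₂).symm r).2).isLt
      simp only [Fin.val_mk]
      omega
    have h3 : ((vecIdx I₁ I₂).symm r) =
        (((vecIdx I₁ I₂).symm r).1, (⟨0, by omega⟩ : Fin I₂)) := by
      rw [Prod.ext_iff]
      exact ⟨rfl, h2⟩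
    show vecIdx I₁ I₂ (((vecIdx I₁ I₂).symm r).1, ⟨0, by omega⟩) = r
    conv_rhs => rw [← Equiv.apply_symm_apply (vecIdx I₁ I₂) r]
    rw [h3]

end RP

/-- if `Φ = U P̃ U'⁻¹` preserves the rank of every folded vector,
then `Φ` is a Kronecker product `A₁ ⊗ A₂` of invertible matrices, or (when
`I₁ = I₂`) `Φ` acts on folded matrices as `X ↦ A₁ Xᵀ A₂`. -/
theorem rank_preserver_of_fold {I₁ I₂ : ℕ}
    (U U' Pt : Matrix (Fin (I₁ * I₂)) (Fin (I₁ * I₂)) ℂ)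
    (hU : IsUnit U.det) (hU' : IsUnit U'.det) (hPt : IsUnit Pt.det)
    (hrank : ∀ a : Fin (I₁ * I₂) → ℂ,
      (fold ((U * Pt * U'⁻¹).mulVec a)).rank = (fold a).rank) :
    (∃ (A₁ : Matrix (Fin I₂) (Fin I₂) ℂ) (A₂ : Matrix (Fin I₁) (Fin I₁) ℂ),
        IsUnit A₁.det ∧ IsUnit A₂.det ∧ U * Pt * U'⁻¹ = kron A₁ A₂) ∨
    (∃ (h : I₁ = I₂) (A₁ : Matrix (Fin I₁) (Fin I₁) ℂ) (A₂ : Matrix (Fin I₂) (Fin I₂) ℂ),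
        IsUnit A₁.det ∧ IsUnit A₂.det ∧
        ∀ X : Matrix (Fin I₁) (Fin I₂) ℂ,
          fold ((U * Pt * U'⁻¹).mulVec (vec X)) =
            A₁ * Xᵀ.submatrix (finCongr h) (finCongr h.symm) * A₂) := by
  classical
  set Φ := U * Pt * U'⁻¹ with hΦdef
  have hΦdet : IsUnit Φ.det := by
    have h1 : Φ.det = U.det * Pt.det * (U'⁻¹).det := by
      rw [hΦdef, Matrix.det_mul, Matrix.det_mul]
    rw [h1, Matrix.det_nonsing_inv]
    refine (hU.mul hPt).mul ?_
    rw [Ring.inverse_eq_inv]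
    exact isUnit_iff_ne_zero.2 (inv_ne_zero (isUnit_iff_ne_zero.1 hU'))
  by_cases hI₁0 : I₁ = 0
  · left
    have h0 : I₁ * I₂ = 0 := by rw [hI₁0, Nat.zero_mul]
    refine ⟨1, 1, by rw [Matrix.det_one]; exact isUnit_one,
      by rw [Matrix.det_one]; exact isUnit_one, ?_⟩
    ext r t
    exact absurd r.isLt (by omega)
  by_cases hI₂0 : I₂ = 0
  · left
    have h0 : I₁ * I₂ = 0 := by rw [hI₂0, Nat.mul_zero]
    refine ⟨1, 1, by rw [Matrix.det_one]; exact isUnit_one,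
      by rw [Matrix.det_one]; exact isUnit_one, ?_⟩
    ext r t
    exact absurd r.isLt (by omega)
  by_cases hI₁1 : I₁ = 1
  · left
    refine ⟨Φ.submatrix (RP.oneEquivL I₁ I₂ hI₁1) (RP.oneEquivL I₁ I₂ hI₁1), 1, ?_, by rw [Matrix.det_one]; exact isUnit_one, ?_⟩
    · rw [Matrix.det_submatrix_equiv_self]
      exact hΦdet
    · ext r t
      show Φ r t = (Φ.submatrix (RP.oneEquivL I₁ I₂ hI₁1) (RP.oneEquivL I₁ I₂ hI₁1)) ((vecIdx I₁ I₂).symm r).2 ((vecIdx I₁ I₂).symm t).2 *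
        (1 : Matrix (Fin I₁) (Fin I₁) ℂ) ((vecIdx I₁ I₂).symm r).1 ((vecIdx I₁ I₂).symm t).1
      have hfix : ((vecIdx I₁ I₂).symm r).1 = ((vecIdx I₁ I₂).symm t).1 := by
        apply Fin.ext
        have h1 := (((vecIdx I₁ I₂).symm r).1).isLt
        have h2 := (((vecIdx I₁ I₂).symm t).1).isLt
        omega
      rw [hfix, Matrix.one_apply_eq, mul_one, Matrix.submatrix_apply]
      rw [show (RP.oneEquivL I₁ I₂ hI₁1) (((vecIdx I₁ I₂).symm r).2) = r from (RP.oneEquivL I₁ I₂ hI₁1).apply_symm_apply r,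
          show (RP.oneEquivL I₁ I₂ hI₁1) (((vecIdx I₁ I₂).symm t).2) = t from (RP.oneEquivL I₁ I₂ hI₁1).apply_symm_apply t]
  by_cases hI₂1 : I₂ = 1
  · left
    refine ⟨1, Φ.submatrix (RP.oneEquivR I₁ I₂ hI₂1) (RP.oneEquivR I₁ I₂ hI₂1), by rw [Matrix.det_one]; exact isUnit_one, ?_, ?_⟩
    · rw [Matrix.det_submatrix_equiv_self]
      exact hΦdet
    · ext r t
      show Φ r t = (1 : Matrix (Fin I₂) (Fin I₂) ℂ) ((vecIdx I₁ I₂).symm r).2 ((vecIdx I₁ I₂).symm t).2 *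
        (Φ.submatrix (RP.oneEquivR I₁ I₂ hI₂1) (RP.oneEquivR I₁ I₂ hI₂1)) ((vecIdx I₁ I₂).symm r).1 ((vecIdx I₁ I₂).symm t).1
      have hfix : ((vecIdx I₁ I₂).symm r).2 = ((vecIdx I₁ I₂).symm t).2 := by
        apply Fin.ext
        have h1 := (((vecIdx I₁ I₂).symm r).2).isLt
        have h2 := (((vecIdx I₁ I₂).symm t).2).isLt
        omega
      rw [hfix, Matrix.one_apply_eq, one_mul, Matrix.submatrix_apply]
      rw [show (RP.oneEquivR I₁ I₂ hI₂1) (((vecIdx I₁ I₂).symm r).1) = r from (RP.oneEquivR I₁ I₂ hI₂1).apply_symm_apply r,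
          show (RP.oneEquivR I₁ I₂ hI₂1) (((vecIdx I₁ I₂).symm t).1) = t from (RP.oneEquivR I₁ I₂ hI₂1).apply_symm_apply t]
  -- main case
  have hm : 2 ≤ I₁ := by omega
  have hn : 2 ≤ I₂ := by omega
  set φ : Matrix (Fin I₁) (Fin I₂) ℂ →ₗ[ℂ] Matrix (Fin I₁) (Fin I₂) ℂ :=
    (RP.foldL I₁ I₂).comp ((Matrix.mulVecLin Φ).comp (RP.vecL I₁ I₂)) with hφdef
  have hφapp : ∀ X, φ X = fold (Φ.mulVec (_root_.vec X)) := fun X => rfl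
  have hΦunit : IsUnit Φ := (Matrix.isUnit_iff_isUnit_det Φ).2 hΦdet
  have hmvinj : Function.Injective Φ.mulVec := Matrix.mulVec_injective_iff_isUnit.2 hΦunit
  have hmvsurj : Function.Surjective Φ.mulVec := Matrix.mulVec_surjective_iff_isUnit.2 hΦunit
  have hφinj : Function.Injective φ := by
    intro X Y h
    rw [hφapp, hφapp] at h
    have h2 := congrArg _root_.vec h
    rw [RP.vec_fold, RP.vec_fold] at h2
    have h3 := hmvinj h2
    have h4 := congrArg fold h3
    rw [RP.fold_vec, RP.fold_vec] at h4
    exact h4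
  have hφsurj : Function.Surjective φ := by
    intro Y
    obtain ⟨a, ha⟩ := hmvsurj (_root_.vec Y)
    exact ⟨fold a, by rw [hφapp, RP.vec_fold, ha, RP.fold_vec]⟩
  have hφrank : ∀ X, (φ X).rank = X.rank := by
    intro X
    rw [hφapp]
    have h1 := hrank (_root_.vec X)
    rw [RP.fold_vec] at h1
    exact h1
  rcases RP.main_abstract hm hn φ hφinj hφsurj hφrank with
    ⟨A, B, hA, hB, hmain⟩ | ⟨h, A, B, hA, hB, hmain⟩
  · left
    refine ⟨Bᵀ, A, by rw [Matrix.det_transpose]; exact hB, hA, ?_⟩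
    apply RP.eq_of_mulVec_eq
    intro a
    calc Φ.mulVec a = _root_.vec (φ (fold a)) := by
          rw [hφapp, RP.vec_fold, RP.vec_fold]
      _ = _root_.vec (A * fold a * B) := by rw [hmain]
      _ = (kron Bᵀ A).mulVec (_root_.vec (fold a)) := by
          rw [RP.kron_mulVec, Matrix.transpose_transpose]
      _ = (kron Bᵀ A).mulVec a := by rw [RP.vec_fold]
  · right
    refine ⟨h, A, B, hA, hB, fun X => ?_⟩
    have h1 := hmain X
    rw [hφapp] at h1
    exact h1
end
end

section
/- The four-qubit GHZ state (|0000⟩ + |1111⟩)/√2 and the four-qubit W state (|0001⟩ + |0010⟩ + |0100⟩ + |1000⟩)/2 are not SLOCC equivalent: there exist no invertible 2×2 complex matrices A₁, A₂, A₃, A₄ with |W⟩ = (A₁ ⊗ A₂ ⊗ A₃ ⊗ A₄)|GHZ⟩. -/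
noncomputable section

/-- The four-qubit GHZ state `(|0000⟩ + |1111⟩)/√2`. -/
def GHZ : Fin 2 → Fin 2 → Fin 2 → Fin 2 → ℂ := fun i j k l =>
  if (i, j, k, l) = (0, 0, 0, 0) ∨ (i, j, k, l) = (1, 1, 1, 1) then
    ((Real.sqrt 2 : ℝ) : ℂ)⁻¹ else 0

/-- The four-qubit W state `(|0001⟩ + |0010⟩ + |0100⟩ + |1000⟩)/2`. -/
def Wstate : Fin 2 → Fin 2 → Fin 2 → Fin 2 → ℂ := fun i j k l =>
  if (i, j, k, l) = (0, 0, 0, 1) ∨ (i, j, k, l) = (0, 0, 1, 0) ∨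
     (i, j, k, l) = (0, 1, 0, 0) ∨ (i, j, k, l) = (1, 0, 0, 0) then
    (1 / 2 : ℂ) else 0

/-- the four-qubit GHZ and W states are not SLOCC equivalent:
no invertible local operator `A₁ ⊗ A₂ ⊗ A₃ ⊗ A₄` maps GHZ to W. -/
theorem ghz_w_not_slocc_equivalent :
    ¬ ∃ A₁ A₂ A₃ A₄ : Matrix (Fin 2) (Fin 2) ℂ,
      IsUnit A₁.det ∧ IsUnit A₂.det ∧ IsUnit A₃.det ∧ IsUnit A₄.det ∧
      ∀ i j k l : Fin 2,
        Wstate i j k l =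
          ∑ i' : Fin 2, ∑ j' : Fin 2, ∑ k' : Fin 2, ∑ l' : Fin 2,
            A₁ i i' * A₂ j j' * A₃ k k' * A₄ l l' * GHZ i' j' k' l' := by
  rintro ⟨A₁, A₂, A₃, A₄, h1, h2, h3, h4, h⟩
  have e0001 := h 0 0 0 1
  have e1001 := h 1 0 0 1
  have e0010 := h 0 0 1 0
  have e1010 := h 1 0 1 0
  have e0100 := h 0 1 0 0
  have e1100 := h 1 1 0 0
  have e0011 := h 0 0 1 1
  have e1011 := h 1 0 1 1
  simp only [Wstate, GHZ, Fin.sum_univ_two] at e0001 e1001 e0010 e1010 e0100 e1100 e0011 e1011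
  norm_num [Prod.ext_iff] at e0001 e1001 e0010 e1010 e0100 e1100 e0011 e1011
  have hs : ((Real.sqrt 2 : ℝ) : ℂ) ≠ 0 := by
    simp only [ne_eq, Complex.ofReal_eq_zero]
    positivity
  have hκ : ((Real.sqrt 2 : ℝ) : ℂ)⁻¹ ≠ 0 := inv_ne_zero hs
  set κ : ℂ := ((Real.sqrt 2 : ℝ) : ℂ)⁻¹ with hκdef
  set a0 := A₁ 0 0; set a1 := A₁ 1 0; set p0 := A₁ 0 1; set p1 := A₁ 1 1
  set b0 := A₂ 0 0; set b1 := A₂ 1 0; set q0 := A₂ 0 1; set q1 := A₂ 1 1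
  set c0 := A₃ 0 0; set c1 := A₃ 1 0; set r0 := A₃ 0 1; set r1 := A₃ 1 1
  set d0 := A₄ 0 0; set d1 := A₄ 1 0; set s0 := A₄ 0 1; set s1 := A₄ 1 1
  have hD : a0 * p1 - p0 * a1 ≠ 0 := by
    have := h1.ne_zero
    rwa [Matrix.det_fin_two] at this
  set μ : ℂ := κ * (a0 * p1 - p0 * a1) with hμdef
  have hμ : μ ≠ 0 := mul_ne_zero hκ hD
  have hF001 : μ * (b0 * c0 * d1) = p1 / 2 := by
    rw [hμdef]; linear_combination (-p1) * e0001 + p0 * e1001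
  have hF010 : μ * (b0 * c1 * d0) = p1 / 2 := by
    rw [hμdef]; linear_combination (-p1) * e0010 + p0 * e1010
  have hF100 : μ * (b1 * c0 * d0) = p1 / 2 := by
    rw [hμdef]; linear_combination (-p1) * e0100 + p0 * e1100
  have hF011 : μ * (b0 * c1 * d1) = 0 := by
    rw [hμdef]; linear_combination (-p1) * e0011 + p0 * e1011
  have hG001 : μ * (q0 * r0 * s1) = -a1 / 2 := by
    rw [hμdef]; linear_combination a1 * e0001 - a0 * e1001
  have hG010 : μ * (q0 * r1 * s0) = -a1 / 2 := by
    rw [hμdef]; linear_combination a1 * e0010 - a0 * e1010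
  have hG100 : μ * (q1 * r0 * s0) = -a1 / 2 := by
    rw [hμdef]; linear_combination a1 * e0100 - a0 * e1100
  have hG011 : μ * (q0 * r1 * s1) = 0 := by
    rw [hμdef]; linear_combination a1 * e0011 - a0 * e1011
  have hp1 : p1 = 0 := by
    have h3 : p1 ^ 3 = 0 := by
      calc p1 ^ 3
          = 8 * ((μ * (b0 * c0 * d1)) * (μ * (b0 * c1 * d0)) * (μ * (b1 * c0 * d0))) := by
            rw [hF001, hF010, hF100]; ring
        _ = 8 * μ ^ 2 * (b0 * b1 * c0 ^ 2 * d0 ^ 2) * (μ * (b0 * c1 * d1)) := by ring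
        _ = 0 := by rw [hF011]; ring
    exact pow_eq_zero_iff (by norm_num) |>.mp h3
  have ha1 : a1 = 0 := by
    have h3 : a1 ^ 3 = 0 := by
      calc a1 ^ 3
          = -8 * ((μ * (q0 * r0 * s1)) * (μ * (q0 * r1 * s0)) * (μ * (q1 * r0 * s0))) := by
            rw [hG001, hG010, hG100]; ring
        _ = -8 * μ ^ 2 * (q0 * q1 * r0 ^ 2 * s0 ^ 2) * (μ * (q0 * r1 * s1)) := by ring
        _ = 0 := by rw [hG011]; ring
    exact pow_eq_zero_iff (by norm_num) |>.mp h3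
  exact hD (by rw [hp1, ha1]; ring)
end
end
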